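/- arXiv:1809.05873 — 6 statements merged into one kernel-verified Lean document; each statement's English description precedes it below -/
import Mathlib

section
/- A directed partially ordered vector space X is a pre-Riesz space if and only if there exist a vector lattice Y and a bipositive linear map i : X → Y such that i(X) is order dense in Y. -/
open Set Filter

section Prelude

variable {E F : Type*}

/-- A linear map is bipositive if `0 ≤ x ↔ 0 ≤ i x`. -/
def IsBipositive [AddCommGroup E] [PartialOrder E] [AddCommGroup F] [PartialOrder F]
    [Module ℝ E] [Module ℝ F] (i : E →ₗ[ℝ] F) : Prop :=
  ∀ x : E, 0 ≤ x ↔ 0 ≤ i x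

/-- The range of `i` is order dense in `F`. -/
def OrderDenseRange [AddCommGroup E] [PartialOrder E] [AddCommGroup F] [PartialOrder F]
    [Module ℝ E] [Module ℝ F] (i : E →ₗ[ℝ] F) : Prop :=
  ∀ y : F, IsGLB {z : F | z ∈ Set.range i ∧ y ≤ z} y

/-- The range of `i` is majorizing in `F`. -/
def MajorizingRange [AddCommGroup E] [PartialOrder E] [AddCommGroup F] [PartialOrder F]
    [Module ℝ E] [Module ℝ F] (i : E →ₗ[ℝ] F) : Prop :=
  ∀ y : F, ∃ x : E, y ≤ i x

/-- Pre-Riesz space property. -/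
def IsPreRiesz (E : Type*) [AddCommGroup E] [PartialOrder E] [Module ℝ E] : Prop :=
  ∀ x y z : E, upperBounds {x + y, x + z} ⊆ upperBounds {y, z} → 0 ≤ x

/-- Archimedean property of a partially ordered group. -/
def ArchimedeanOrderPO (E : Type*) [AddCommGroup E] [PartialOrder E] : Prop :=
  ∀ x y : E, (∀ n : ℕ, n • x ≤ y) → x ≤ 0

/-- Pervasiveness of the embedding `i` of a pre-Riesz space into a vector lattice cover. -/
def Pervasive [AddCommGroup E] [PartialOrder E] [AddCommGroup F] [PartialOrder F]
    [Module ℝ E] [Module ℝ F] (i : E →ₗ[ℝ] F) : Prop :=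
  ∀ y : F, 0 < y → ∃ x : E, 0 < i x ∧ i x ≤ y

/-- Dedekind completeness of a partially ordered set. -/
def DedekindComplete (F : Type*) [Preorder F] : Prop :=
  ∀ S : Set F, S.Nonempty → BddAbove S → ∃ a, IsLUB S a

/-- Regular seminorm. -/
def IsRegularSeminorm [AddCommGroup E] [PartialOrder E] [Module ℝ E]
    (p : Seminorm ℝ E) : Prop :=
  ∀ x : E, p x = sInf (p '' {y : E | -y ≤ x ∧ x ≤ y})

/-- Monotone seminorm. -/
def IsMonotoneSeminorm [AddCommGroup E] [PartialOrder E] [Module ℝ E]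
    (p : Seminorm ℝ E) : Prop :=
  ∀ x y : E, 0 ≤ x → x ≤ y → p x ≤ p y

/-- Semimonotone seminorm. -/
def IsSemimonotoneSeminorm [AddCommGroup E] [PartialOrder E] [Module ℝ E]
    (p : Seminorm ℝ E) : Prop :=
  ∃ C : ℝ, 0 < C ∧ ∀ x y : E, 0 ≤ x → x ≤ y → p x ≤ C * p y

/-- The regular extension of the seminorm `p` along the embedding `i`. -/
noncomputable def regExt [AddCommGroup E] [PartialOrder E] [AddCommGroup F] [PartialOrder F]
    [Module ℝ E] [Module ℝ F] (p : Seminorm ℝ E) (i : E →ₗ[ℝ] F) (y : F) : ℝ :=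
  sInf (p '' {x : E | -(i x) ≤ y ∧ y ≤ i x})

/-- Order convergence of a net: there is a set `D` downward directed with infimum `0`
such that eventually `±(x α - l) ≤ d` for every `d ∈ D`. -/
def OrderConvergesTo [AddCommGroup F] [PartialOrder F] {ι : Type*} [Preorder ι]
    (x : ι → F) (l : F) : Prop :=
  ∃ D : Set F, D.Nonempty ∧ DirectedOn (· ≥ ·) D ∧ IsGLB D 0 ∧
    ∀ d ∈ D, ∃ α₀ : ι, ∀ α, α₀ ≤ α → -d ≤ x α - l ∧ x α - l ≤ d

/-- Order continuity of a seminorm-like function: order convergent nets are sent to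
norm-null nets. -/
def OrderContinuousSemFun [AddCommGroup F] [PartialOrder F] (p : F → ℝ) : Prop :=
  ∀ (ι : Type) [Preorder ι] [IsDirected ι (· ≤ ·)] [Nonempty ι],
    ∀ (x : ι → F) (l : F), OrderConvergesTo x l →
      Tendsto (fun α => p (x α - l)) atTop (nhds 0)

/-- Compactness of a map with respect to seminorm-like functions `p` (domain) and
`q` (codomain): bounded sequences are mapped to sequences with a `q`-convergent
subsequence. -/
def SCompact [AddCommGroup E] [AddCommGroup F] (p : E → ℝ) (q : F → ℝ) (T : E → F) : Prop :=
  ∀ x : ℕ → E, (∃ M : ℝ, ∀ n, p (x n) ≤ M) →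
    ∃ (φ : ℕ → ℕ) (l : F), StrictMono φ ∧
      Tendsto (fun n => q (T (x (φ n)) - l)) atTop (nhds 0)

/-- Order unit. -/
def IsOrderUnit [AddCommGroup E] [PartialOrder E] [Module ℝ E] (e : E) : Prop :=
  ∀ x : E, ∃ l : ℝ, 0 < l ∧ x ≤ l • e

/-- The order unit (semi)norm associated to `e`. -/
noncomputable def unitNorm [AddCommGroup E] [PartialOrder E] [Module ℝ E] (e x : E) : ℝ :=
  sInf {l : ℝ | 0 < l ∧ -(l • e) ≤ x ∧ x ≤ l • e}

/-- A linear functional bounded with respect to a seminorm-like function `p`. -/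
def BddLin [AddCommGroup E] [Module ℝ E] (p : E → ℝ) (f : E →ₗ[ℝ] ℝ) : Prop :=
  ∃ C : ℝ, ∀ x, |f x| ≤ C * p x

end Prelude

/-!
The vector lattice cover is constructed directly. A pair `(A, B)` of finite nonempty subsets of
`X` stands for `sup A - sup B`, and `(A, B) ≤ (C, D)` means that every upper bound of `C + B` is
one of `A + D`. Extended by induction from pairs to finite sets, the pre-Riesz property is what
allows finite sets to be cancelled in such comparisons; this makes the relation transitive, and
the quotient is an ordered vector space with `(A, B) ⊔ (C, D) = ((A + D) ∪ (C + B), B + D)`, into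
which `x ↦ ({x}, {0})` embeds bipositively. Nonnegative scalars act pointwise, and `r` acts as
`r⁺ • · - r⁻ • ·`. Order density comes down to `sup (A + D) = inf (A^u + D^u)`, again a
cancellation.

Conversely, if `i(X)` is order dense in a lattice and `{x + y, x + z}^u ⊆ {y, z}^u`, then
`i y ⊔ i z - i x` lies below every majorant of `i y ⊔ i z` in `i(X)`, hence below `i y ⊔ i z`.
-/

open Pointwise
open scoped NNReal

section UpperBounds

variable {X : Type*} [AddCommGroup X] [PartialOrder X]

theorem mem_upperBounds_add_iff {S T : Set X} {v : X} :
    v ∈ upperBounds (S + T) ↔ ∀ s ∈ S, ∀ t ∈ T, s + t ≤ v := by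
  simp only [mem_upperBounds, Set.mem_add]
  grind

theorem mem_upperBounds_singleton_add_iff {x v : X} {S : Set X} :
    v ∈ upperBounds ({x} + S) ↔ ∀ t ∈ S, x + t ≤ v := by
  rw [mem_upperBounds_add_iff]
  simp

theorem upperBounds_smul_subset_upperBounds_smul [Module ℝ X] [PosSMulMono ℝ X] {c : ℝ}
    (hc : 0 ≤ c) {S T : Set X} (hS : S.Nonempty) (h : upperBounds S ⊆ upperBounds T) :
    upperBounds (c • S) ⊆ upperBounds (c • T) := by
  rcases hc.eq_or_lt with rfl | hc
  · rw [Set.zero_smul_set hS]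
    exact upperBounds_mono_set (Set.zero_smul_set_subset T)
  · rw [upperBounds_smul_of_pos hc, upperBounds_smul_of_pos hc]
    exact Set.smul_set_mono h

variable [AddLeftMono X]

theorem le_of_le_of_sub_eq_sub {a b c d : X} (h : a ≤ b) (e : d - c = b - a) : c ≤ d :=
  sub_nonneg.mp (e ▸ sub_nonneg.mpr h)

theorem upperBounds_add_subset_upperBounds_add {S T : Set X}
    (h : upperBounds S ⊆ upperBounds T) (R : Set X) :
    upperBounds (S + R) ⊆ upperBounds (T + R) := by
  simp only [Set.subset_def, mem_upperBounds_add_iff] at h ⊢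
  intro v hv t ht r hr
  exact le_sub_iff_add_le.mp (h (v - r) (fun s hs => le_sub_iff_add_le.mpr (hv s hs r hr)) ht)

theorem upperBounds_add_congr {S T : Set X} (h : upperBounds S = upperBounds T) (R : Set X) :
    upperBounds (S + R) = upperBounds (T + R) :=
  (upperBounds_add_subset_upperBounds_add h.le R).antisymm
    (upperBounds_add_subset_upperBounds_add h.ge R)

theorem upperBounds_add_smul [Module ℝ X] [PosSMulMono ℝ X] {a b : ℝ} (ha : 0 ≤ a) (hb : 0 ≤ b)
    (S : Set X) : upperBounds ((a + b) • S) = upperBounds (a • S + b • S) := by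
  refine (upperBounds_mono_set (Set.add_smul_subset a b S)).antisymm' fun v hv => ?_
  rintro _ ⟨_, ⟨x, hx, rfl⟩, _, ⟨y, hy, rfl⟩, rfl⟩
  have hxv : (a + b) • x ≤ v := hv (Set.smul_mem_smul_set hx)
  have hyv : (a + b) • y ≤ v := hv (Set.smul_mem_smul_set hy)
  rcases (add_nonneg ha hb).eq_or_lt with hab | hab
  · obtain ⟨rfl, rfl⟩ : a = 0 ∧ b = 0 := by constructor <;> linarith
    simpa using hxv
  -- `a • x + b • y` is a convex combination of `(a + b) • x` and `(a + b) • y`.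
  calc a • x + b • y = (a + b)⁻¹ • (a • (a + b) • x + b • (a + b) • y) := by
        match_scalars <;> field_simp
    _ ≤ (a + b)⁻¹ • (a • v + b • v) := by gcongr
    _ = v := by match_scalars; field_simp

end UpperBounds

section PreRiesz

variable {X : Type*} [AddCommGroup X] [PartialOrder X] [AddLeftMono X] [Module ℝ X]

theorem IsPreRiesz.nonneg_of_upperBounds_singleton_add_subset (hX : IsPreRiesz X) {S : Set X}
    (hS : S.Finite) (hne : S.Nonempty) {x : X} (h : upperBounds ({x} + S) ⊆ upperBounds S) :
    0 ≤ x := by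
  induction hcard : S.ncard using Nat.strong_induction_on generalizing S x with
  | _ n ih =>
  subst hcard
  obtain ⟨a, ha⟩ := hne
  by_cases hSa : S = {a}
  · subst hSa
    simpa using h (show x + a ∈ upperBounds ({x} + {a}) by simp)
  obtain ⟨b, hb, hba⟩ : ∃ b ∈ S, b ≠ a := by
    by_contra! hS'
    exact hSa (Set.eq_singleton_iff_unique_mem.mpr ⟨ha, hS'⟩)
  -- Induction on `S \ {a}`: a common upper bound of `x` and `x + (a - b)` is nonnegative.
  -- Swapping `a` and `b` shows it also dominates `a - b`, and the pre-Riesz property for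
  -- `(x, 0, a - b)` concludes.
  have key : ∀ a ∈ S, ∀ b ∈ S, b ≠ a → ∀ p, x ≤ p → x + (a - b) ≤ p → 0 ≤ p := by
    intro a ha b hb hba p hxp hxp'
    have hb' : b ∈ S \ {a} := ⟨hb, hba⟩
    refine ih _ (Set.ncard_sdiff_singleton_lt_of_mem ha hS) hS.sdiff ⟨b, hb'⟩ ?_ rfl
    intro v hv
    rw [mem_upperBounds_singleton_add_iff] at hv
    refine upperBounds_mono_set Set.sdiff_subset (h ?_)
    rw [mem_upperBounds_singleton_add_iff]
    intro t ht
    by_cases hta : t = a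
    · subst hta
      calc x + t = x + (t - b) + b := by abel
        _ ≤ p + b := by gcongr
        _ ≤ v := hv b hb'
    · exact (add_le_add_left hxp t).trans (hv t ⟨ht, hta⟩)
  refine hX x 0 (a - b) fun v hv => ?_
  simp only [upperBounds_insert, upperBounds_singleton, add_zero, Set.mem_inter_iff,
    Set.mem_Ici] at hv ⊢
  refine ⟨key a ha b hb hba v hv.1 hv.2, ?_⟩
  refine sub_nonneg.mp (key b hb a ha hba.symm _ (le_sub_iff_add_le.mpr hv.2) ?_)
  calc x + (b - a) = x - (a - b) := by abel
    _ ≤ v - (a - b) := sub_le_sub_right hv.1 _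

theorem IsPreRiesz.upperBounds_subset_of_upperBounds_add_subset (hX : IsPreRiesz X)
    {A B C : Set X} (hC : C.Finite) (hCne : C.Nonempty)
    (h : upperBounds (A + C) ⊆ upperBounds (B + C)) : upperBounds A ⊆ upperBounds B := by
  intro u hu b hb
  refine sub_nonneg.mp (hX.nonneg_of_upperBounds_singleton_add_subset hC hCne fun v hv => ?_)
  rw [mem_upperBounds_singleton_add_iff] at hv
  have hvb : v + b ∈ upperBounds (A + C) := by
    rw [mem_upperBounds_add_iff]
    intro a ha c hc
    calc a + c ≤ u + c := by gcongr; exact hu ha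
      _ = u - b + c + b := by abel
      _ ≤ v + b := by gcongr; exact hv c hc
  intro c hc
  have hbc := mem_upperBounds_add_iff.mp (h hvb) b hb c hc
  rwa [add_comm v, add_le_add_iff_left] at hbc

theorem IsPreRiesz.lowerBounds_upperBounds_add_subset (hX : IsPreRiesz X) {A D : Set X}
    (hA : A.Finite) (hAne : A.Nonempty) (hD : D.Finite) (hDne : D.Nonempty) :
    lowerBounds (upperBounds A + upperBounds D) ⊆ lowerBounds (upperBounds (A + D)) := by
  intro y hy v hv
  refine sub_nonneg.mp (hX.nonneg_of_upperBounds_singleton_add_subset (hA.add hD)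
    (hAne.add hDne) fun w hw => ?_)
  rw [mem_upperBounds_singleton_add_iff] at hw
  rw [mem_upperBounds_add_iff]
  intro a ha δ hδ
  suffices hwa : w - a ∈ upperBounds D from le_sub_iff_add_le'.mp (hwa hδ)
  -- Cancel `D` from `{w - a} + D ≤ D + D`.
  refine hX.upperBounds_subset_of_upperBounds_add_subset hD hDne (A := {w - a}) ?_
    (by simp : w - a ∈ upperBounds {w - a})
  intro e he
  rw [mem_upperBounds_singleton_add_iff] at he
  rw [mem_upperBounds_add_iff]
  intro δ₁ hδ₁ δ₂ hδ₂
  have hu : w + y - a - δ₁ - δ₂ ∈ upperBounds A := fun a' ha' =>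
    le_of_le_of_sub_eq_sub (add_le_add (hw _ (Set.add_mem_add ha hδ₁))
      (hv (Set.add_mem_add ha' hδ₂))) (by abel)
  have he' : e - (w - a) ∈ upperBounds D := fun t ht => le_sub_iff_add_le'.mpr (he t ht)
  exact le_of_le_of_sub_eq_sub (hy (Set.add_mem_add hu he')) (by abel)

end PreRiesz

theorem Real.coe_toNNReal_sub_coe_toNNReal_neg (r : ℝ) :
    (r.toNNReal : ℝ) - ((-r).toNNReal : ℝ) = r := by
  rw [Real.coe_toNNReal', Real.coe_toNNReal', max_zero_sub_max_neg_zero_eq_self]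

theorem map_sub_map_eq_map_sub_map {M G F : Type*} [AddCommMonoid M] [AddCommGroup G]
    [FunLike F M G] [AddHomClass F M G] (f : F) {a b c d : M} (h : a + d = c + b) :
    f a - f b = f c - f d :=
  sub_eq_sub_iff_add_eq_add.mpr (by rw [← map_add, ← map_add, h])

noncomputable def RingHom.extendNNReal {R : Type*} [Ring R] (f : ℝ≥0 →+* R) : ℝ →+* R where
  toFun r := f r.toNNReal - f (-r).toNNReal
  map_one' := by simp [Real.toNNReal_eq_zero.mpr (by norm_num : (-1 : ℝ) ≤ 0)]
  map_zero' := by simp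
  map_add' r s := by
    rw [sub_add_sub_comm, ← map_add, ← map_add]
    refine map_sub_map_eq_map_sub_map f (NNReal.eq ?_)
    push_cast
    linear_combination Real.coe_toNNReal_sub_coe_toNNReal_neg (r + s) -
      Real.coe_toNNReal_sub_coe_toNNReal_neg r - Real.coe_toNNReal_sub_coe_toNNReal_neg s
  map_mul' r s := by
    rw [sub_mul, mul_sub, mul_sub, ← map_mul, ← map_mul, ← map_mul, ← map_mul, sub_sub_sub_eq,
      ← map_add, ← map_add]
    refine map_sub_map_eq_map_sub_map f (NNReal.eq ?_)
    push_cast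
    linear_combination Real.coe_toNNReal_sub_coe_toNNReal_neg (r * s) -
      ((r.toNNReal : ℝ) - (-r).toNNReal) * Real.coe_toNNReal_sub_coe_toNNReal_neg s -
      s * Real.coe_toNNReal_sub_coe_toNNReal_neg r

section Construction

variable (X : Type*) [AddCommGroup X]

def finiteNonemptySets : AddSubmonoid (Set X) where
  carrier := {S | S.Finite ∧ S.Nonempty}
  add_mem' hS hT := ⟨hS.1.add hT.1, hS.2.add hT.2⟩
  zero_mem' := ⟨Set.finite_zero, Set.zero_nonempty⟩

/-- `(A, B)` stands for the formal difference `sup A - sup B`. -/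
def SupDiff := finiteNonemptySets X × finiteNonemptySets X

namespace SupDiff

instance : AddCommMonoid (SupDiff X) := inferInstanceAs (AddCommMonoid (_ × _))

variable {X}

abbrev plus (p : SupDiff X) : Set X := p.1
abbrev minus (p : SupDiff X) : Set X := p.2

@[ext] theorem ext {p q : SupDiff X} (h₁ : p.plus = q.plus) (h₂ : p.minus = q.minus) : p = q :=
  Prod.ext (Subtype.ext h₁) (Subtype.ext h₂)

@[simp] theorem plus_add (p q : SupDiff X) : (p + q).plus = p.plus + q.plus := rfl
@[simp] theorem minus_add (p q : SupDiff X) : (p + q).minus = p.minus + q.minus := rfl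
@[simp] theorem plus_zero : (0 : SupDiff X).plus = 0 := rfl
@[simp] theorem minus_zero : (0 : SupDiff X).minus = 0 := rfl

instance : Neg (SupDiff X) := ⟨fun p => (p.2, p.1)⟩

@[simp] theorem plus_neg (p : SupDiff X) : (-p).plus = p.minus := rfl
@[simp] theorem minus_neg (p : SupDiff X) : (-p).minus = p.plus := rfl

instance : Max (SupDiff X) :=
  ⟨fun p q => (⟨p.plus + q.minus ∪ (q.plus + p.minus),
    (p.1.2.1.add q.2.2.1).union (q.1.2.1.add p.2.2.1),
    (p.1.2.2.add q.2.2.2).mono Set.subset_union_left⟩, p.2 + q.2)⟩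

@[simp] theorem plus_sup (p q : SupDiff X) :
    (p ⊔ q).plus = p.plus + q.minus ∪ (q.plus + p.minus) := rfl
@[simp] theorem minus_sup (p q : SupDiff X) : (p ⊔ q).minus = p.minus + q.minus := rfl

def of : X →+ SupDiff X where
  toFun x := (⟨{x}, Set.finite_singleton x, Set.singleton_nonempty x⟩, 0)
  map_zero' := rfl
  map_add' _ _ := SupDiff.ext Set.singleton_add_singleton.symm (add_zero 0).symm

@[simp] theorem plus_of (x : X) : (of x).plus = {x} := rfl
@[simp] theorem minus_of (x : X) : (of x).minus = 0 := rfl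

section Scale

variable [Module ℝ X]

def scale (c : ℝ≥0) : SupDiff X →+ SupDiff X where
  toFun p := (⟨(c : ℝ) • p.plus, p.1.2.1.smul_set, p.1.2.2.smul_set⟩,
    ⟨(c : ℝ) • p.minus, p.2.2.1.smul_set, p.2.2.2.smul_set⟩)
  map_zero' := SupDiff.ext (smul_zero _) (smul_zero _)
  map_add' _ _ := SupDiff.ext (smul_add _ _ _) (smul_add _ _ _)

@[simp] theorem plus_scale (c : ℝ≥0) (p : SupDiff X) : (scale c p).plus = (c : ℝ) • p.plus := rfl
@[simp] theorem minus_scale (c : ℝ≥0) (p : SupDiff X) :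
    (scale c p).minus = (c : ℝ) • p.minus := rfl

theorem scale_of (c : ℝ≥0) (x : X) : scale c (of x) = of ((c : ℝ) • x) :=
  SupDiff.ext Set.smul_set_singleton (smul_zero _)

theorem scale_one (p : SupDiff X) : scale 1 p = p := SupDiff.ext (one_smul _ _) (one_smul _ _)

theorem scale_mul (a b : ℝ≥0) (p : SupDiff X) : scale (a * b) p = scale a (scale b p) :=
  SupDiff.ext (by simp [mul_smul]) (by simp [mul_smul])

theorem scale_zero (p : SupDiff X) : scale 0 p = 0 :=
  SupDiff.ext (by simpa using Set.zero_smul_set p.1.2.2) (by simpa using Set.zero_smul_set p.2.2.2)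

end Scale

variable [PartialOrder X] [AddLeftMono X] [Module ℝ X] [Fact (IsPreRiesz X)]

instance : Preorder (SupDiff X) where
  le p q := upperBounds (q.plus + p.minus) ⊆ upperBounds (p.plus + q.minus)
  le_refl _ := subset_rfl
  le_trans p q r hpq hqr :=
    (Fact.out : IsPreRiesz X).upperBounds_subset_of_upperBounds_add_subset
      (C := q.plus + q.minus) (q.1 + q.2).2.1 (q.1 + q.2).2.2 <| calc
    upperBounds (r.plus + p.minus + (q.plus + q.minus))
      = upperBounds ((r.plus + q.minus) + (p.minus + q.plus)) := by congr 1; abel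
    _ ⊆ upperBounds ((q.plus + r.minus) + (p.minus + q.plus)) :=
      upperBounds_add_subset_upperBounds_add hqr _
    _ = upperBounds ((q.plus + p.minus) + (r.minus + q.plus)) := by congr 1; abel
    _ ⊆ upperBounds ((p.plus + q.minus) + (r.minus + q.plus)) :=
      upperBounds_add_subset_upperBounds_add hpq _
    _ = upperBounds (p.plus + r.minus + (q.plus + q.minus)) := by congr 1; abel

theorem le_def {p q : SupDiff X} :
    p ≤ q ↔ upperBounds (q.plus + p.minus) ⊆ upperBounds (p.plus + q.minus) := Iff.rfl

instance : IsOrderedAddMonoid (SupDiff X) where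
  add_le_add_left p q h r := calc
    upperBounds ((q + r).plus + (p + r).minus)
      = upperBounds ((q.plus + p.minus) + (r.plus + r.minus)) := by
        simp only [plus_add, minus_add]; congr 1; abel
    _ ⊆ upperBounds ((p.plus + q.minus) + (r.plus + r.minus)) :=
      upperBounds_add_subset_upperBounds_add h _
    _ = upperBounds ((p + r).plus + (q + r).minus) := by
      simp only [plus_add, minus_add]; congr 1; abel

theorem neg_le_neg {p q : SupDiff X} (h : p ≤ q) : -q ≤ -p := by
  rw [le_def, plus_neg, minus_neg, plus_neg, minus_neg, add_comm, add_comm q.minus]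
  exact h

theorem neg_add_antisymmRel_zero (p : SupDiff X) : AntisymmRel (· ≤ ·) (-p + p) 0 := by
  have h : upperBounds ((0 : SupDiff X).plus + (-p + p).minus) =
      upperBounds ((-p + p).plus + (0 : SupDiff X).minus) := by
    simp only [plus_add, minus_add, plus_neg, minus_neg, plus_zero, minus_zero]
    congr 1; abel
  exact ⟨h.le, h.ge⟩

theorem le_sup_left (p q : SupDiff X) : p ≤ p ⊔ q := by
  rw [le_def, plus_sup, minus_sup, Set.union_add, upperBounds_union]
  refine Set.inter_subset_left.trans (le_of_eq ?_)
  congr 1; abel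

theorem le_sup_right (p q : SupDiff X) : q ≤ p ⊔ q := by
  rw [le_def, plus_sup, minus_sup, Set.union_add, upperBounds_union]
  refine Set.inter_subset_right.trans (le_of_eq ?_)
  congr 1; abel

theorem sup_le {p q r : SupDiff X} (hp : p ≤ r) (hq : q ≤ r) : p ⊔ q ≤ r := by
  rw [le_def, plus_sup, minus_sup, Set.union_add, upperBounds_union]
  refine Set.subset_inter ?_ ?_
  · calc upperBounds (r.plus + (p.minus + q.minus))
        = upperBounds ((r.plus + p.minus) + q.minus) := by rw [add_assoc]
      _ ⊆ upperBounds ((p.plus + r.minus) + q.minus) :=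
        upperBounds_add_subset_upperBounds_add hp _
      _ = upperBounds (p.plus + q.minus + r.minus) := by rw [add_right_comm]
  · calc upperBounds (r.plus + (p.minus + q.minus))
        = upperBounds ((r.plus + q.minus) + p.minus) := by congr 1; abel
      _ ⊆ upperBounds ((q.plus + r.minus) + p.minus) :=
        upperBounds_add_subset_upperBounds_add hq _
      _ = upperBounds (q.plus + p.minus + r.minus) := by rw [add_right_comm]

theorem sup_le_sup {p p' q q' : SupDiff X} (hp : p ≤ p') (hq : q ≤ q') : p ⊔ q ≤ p' ⊔ q' :=
  sup_le (hp.trans (le_sup_left p' q')) (hq.trans (le_sup_right p' q'))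

theorem le_of_iff {p : SupDiff X} {d : X} :
    p ≤ of d ↔ upperBounds ({d} + p.minus) ⊆ upperBounds p.plus := by
  rw [le_def, plus_of, minus_of, add_zero]

theorem of_le_of_iff {x y : X} : of x ≤ of y ↔ x ≤ y := by
  rw [le_of_iff, minus_of, add_zero, plus_of, upperBounds_singleton, upperBounds_singleton,
    Set.Ici_subset_Ici]

/-- Every `p` is the infimum of the `of d` above it. -/
theorem le_of_forall_le_of_imp_le {p q : SupDiff X} (h : ∀ d, p ≤ of d → q ≤ of d) : q ≤ p := by
  rintro v hv _ ⟨c, hc, b, hb, rfl⟩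
  refine (Fact.out : IsPreRiesz X).lowerBounds_upperBounds_add_subset p.1.2.1 p.1.2.2 q.2.2.1
    q.2.2.2 ?_ hv
  rintro _ ⟨u, hu, e, he, rfl⟩
  have hpu : p ≤ of (u - b) := le_of_iff.mpr fun w hw a ha =>
    (hu ha).trans (by simpa using mem_upperBounds_singleton_add_iff.mp hw b hb)
  have hc' : c ≤ u - b + e := le_of_iff.mp (h _ hpu)
    (mem_upperBounds_singleton_add_iff.mpr fun t ht => add_le_add_right (he ht) _) hc
  show c + b ≤ u + e
  exact le_of_le_of_sub_eq_sub hc' (by abel)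

variable [PosSMulMono ℝ X]

theorem scale_mono (c : ℝ≥0) : Monotone (scale c : SupDiff X → SupDiff X) := by
  intro p q h
  rw [le_def, plus_scale, minus_scale, plus_scale, minus_scale, ← smul_add, ← smul_add]
  exact upperBounds_smul_subset_upperBounds_smul c.2 (q.1.2.2.add p.2.2.2) h

theorem scale_add_antisymmRel (a b : ℝ≥0) (p : SupDiff X) :
    AntisymmRel (· ≤ ·) (scale (a + b) p) (scale a p + scale b p) := by
  have hP := upperBounds_add_smul a.2 b.2 p.plus
  have hM := upperBounds_add_smul a.2 b.2 p.minus
  have h : upperBounds ((scale a p + scale b p).plus + (scale (a + b) p).minus) =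
      upperBounds ((scale (a + b) p).plus + (scale a p + scale b p).minus) := by
    simp only [plus_add, minus_add, plus_scale, minus_scale, NNReal.coe_add]
    refine (upperBounds_add_congr hP.symm _).trans ?_
    rw [add_comm, add_comm _ (_ • p.minus + _)]
    exact upperBounds_add_congr hM _
  exact ⟨h.le, h.ge⟩

end SupDiff

end Construction

section Completion

variable (X : Type*) [AddCommGroup X] [PartialOrder X] [AddLeftMono X] [Module ℝ X]
  [Fact (IsPreRiesz X)]

def RieszCompletion := Antisymmetrization (SupDiff X) (· ≤ ·)

namespace RieszCompletion

instance : PartialOrder (RieszCompletion X) :=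
  inferInstanceAs (PartialOrder (Antisymmetrization _ _))

variable {X}

def mk : SupDiff X → RieszCompletion X := toAntisymmetrization (· ≤ ·)

instance : Zero (RieszCompletion X) := ⟨mk 0⟩

instance : Add (RieszCompletion X) :=
  ⟨Quotient.map₂ (· + ·) fun _ _ h₁ _ _ h₂ =>
    ⟨add_le_add h₁.1 h₂.1, add_le_add h₁.2 h₂.2⟩⟩

instance : Neg (RieszCompletion X) :=
  ⟨Quotient.map Neg.neg fun _ _ h => ⟨SupDiff.neg_le_neg h.2, SupDiff.neg_le_neg h.1⟩⟩

theorem mk_add (p q : SupDiff X) : mk (p + q) = mk p + mk q := rfl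

instance : AddCommGroup (RieszCompletion X) where
  add_assoc := by rintro ⟨p⟩ ⟨q⟩ ⟨r⟩; exact congrArg mk (add_assoc p q r)
  zero_add := by rintro ⟨p⟩; exact congrArg mk (zero_add p)
  add_zero := by rintro ⟨p⟩; exact congrArg mk (add_zero p)
  add_comm := by rintro ⟨p⟩ ⟨q⟩; exact congrArg mk (add_comm p q)
  neg_add_cancel := by rintro ⟨p⟩; exact Quotient.sound (SupDiff.neg_add_antisymmRel_zero p)
  nsmul := nsmulRec
  zsmul := zsmulRec

instance : IsOrderedAddMonoid (RieszCompletion X) where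
  add_le_add_left := by rintro ⟨p⟩ ⟨q⟩ h ⟨r⟩; exact add_le_add (α := SupDiff X) h le_rfl

instance : SemilatticeSup (RieszCompletion X) where
  sup := Quotient.map₂ (· ⊔ ·) fun _ _ h₁ _ _ h₂ =>
    ⟨SupDiff.sup_le_sup h₁.1 h₂.1, SupDiff.sup_le_sup h₁.2 h₂.2⟩
  le_sup_left := by rintro ⟨p⟩ ⟨q⟩; exact SupDiff.le_sup_left p q
  le_sup_right := by rintro ⟨p⟩ ⟨q⟩; exact SupDiff.le_sup_right p q
  sup_le := by rintro ⟨p⟩ ⟨q⟩ ⟨r⟩; exact SupDiff.sup_le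

instance : Lattice (RieszCompletion X) where
  inf a b := -(-a ⊔ -b)
  inf_le_left _ _ := neg_le.mpr le_sup_left
  inf_le_right _ _ := neg_le.mpr le_sup_right
  le_inf _ _ _ hb hc := le_neg.mpr (sup_le (neg_le_neg hb) (neg_le_neg hc))

def mkAddHom : SupDiff X →+ RieszCompletion X where
  toFun := mk
  map_zero' := rfl
  map_add' := mk_add

variable [PosSMulMono ℝ X]

def scale (c : ℝ≥0) : RieszCompletion X →+ RieszCompletion X where
  toFun := Quotient.map (SupDiff.scale c) fun _ _ h => h.image (SupDiff.scale_mono c)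
  map_zero' := congrArg mk (map_zero _)
  map_add' := by rintro ⟨p⟩ ⟨q⟩; exact congrArg mk (map_add _ p q)

theorem scale_mono (c : ℝ≥0) : Monotone (scale c : RieszCompletion X → RieszCompletion X) := by
  rintro ⟨p⟩ ⟨q⟩ h
  exact SupDiff.scale_mono c h

theorem scale_zero_apply (y : RieszCompletion X) : scale 0 y = 0 := by
  induction y using Quotient.ind with | _ p => exact congrArg mk (SupDiff.scale_zero p)

def scaleHom : ℝ≥0 →+* AddMonoid.End (RieszCompletion X) where
  toFun := scale
  map_one' := AddMonoidHom.ext <| by rintro ⟨p⟩; exact congrArg mk (SupDiff.scale_one p)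
  map_mul' a b := AddMonoidHom.ext <| by rintro ⟨p⟩; exact congrArg mk (SupDiff.scale_mul a b p)
  map_zero' := AddMonoidHom.ext scale_zero_apply
  map_add' a b := AddMonoidHom.ext <| by
    rintro ⟨p⟩; exact Quotient.sound (SupDiff.scale_add_antisymmRel a b p)

noncomputable instance : Module ℝ (RieszCompletion X) :=
  Module.compHom _ (scaleHom (X := X)).extendNNReal

theorem smul_def (r : ℝ) (y : RieszCompletion X) :
    r • y = scale r.toNNReal y - scale (-r).toNNReal y := rfl

instance : PosSMulMono ℝ (RieszCompletion X) where
  smul_le_smul_of_nonneg_left r hr a b hab := by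
    rw [smul_def, smul_def, Real.toNNReal_eq_zero.mpr (neg_nonpos.mpr hr), scale_zero_apply,
      scale_zero_apply, sub_zero, sub_zero]
    exact scale_mono _ hab

def embed : X →ₗ[ℝ] RieszCompletion X :=
  { mkAddHom.comp SupDiff.of with
    map_smul' := fun r x => by
      change mkAddHom.comp SupDiff.of (r • x) = r • mkAddHom.comp SupDiff.of x
      have hx : (r.toNNReal : ℝ) • x - ((-r).toNNReal : ℝ) • x = r • x := by
        rw [← sub_smul, Real.coe_toNNReal_sub_coe_toNNReal_neg]
      rw [smul_def, ← hx, map_sub]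
      congr 1 <;> exact congrArg mk (SupDiff.scale_of _ x).symm }

theorem embed_le_embed_iff {x y : X} : embed x ≤ embed y ↔ x ≤ y := SupDiff.of_le_of_iff

theorem isBipositive_embed : IsBipositive (embed : X →ₗ[ℝ] RieszCompletion X) := fun x => by
  rw [← map_zero embed, embed_le_embed_iff]

theorem orderDenseRange_embed : OrderDenseRange (embed : X →ₗ[ℝ] RieszCompletion X) := by
  rintro ⟨p⟩
  refine ⟨fun _ h => h.2, ?_⟩
  rintro ⟨q⟩ hq
  exact SupDiff.le_of_forall_le_of_imp_le fun d hd => hq ⟨⟨d, rfl⟩, hd⟩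

end RieszCompletion

end Completion

section Converse

variable {X Y : Type*} [AddCommGroup X] [PartialOrder X] [AddLeftMono X] [Module ℝ X]
  [AddCommGroup Y] [SemilatticeSup Y] [AddLeftMono Y] [Module ℝ Y] {i : X →ₗ[ℝ] Y}

theorem IsBipositive.map_le_map_iff (hi : IsBipositive i) {x y : X} : i x ≤ i y ↔ x ≤ y := by
  rw [← sub_nonneg, ← map_sub, ← hi, sub_nonneg]

theorem IsBipositive.isPreRiesz (hi : IsBipositive i) (hd : OrderDenseRange i) : IsPreRiesz X := by
  intro x y z h
  simp only [upperBounds_insert, upperBounds_singleton] at h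
  refine (hi x).mpr (sub_le_self_iff (i y ⊔ i z) |>.mp ((hd _).2 ?_))
  rintro _ ⟨⟨d, rfl⟩, hyzd⟩
  obtain ⟨hyd, hzd⟩ := sup_le_iff.mp hyzd
  rw [hi.map_le_map_iff] at hyd hzd
  obtain ⟨hy, hz⟩ : y ≤ x + d ∧ z ≤ x + d :=
    h ⟨(add_le_add_iff_left x).mpr hyd, (add_le_add_iff_left x).mpr hzd⟩
  rw [← hi.map_le_map_iff, map_add] at hy hz
  exact sub_le_iff_le_add'.mpr (sup_le hy hz)

end Converse

theorem statement0_general {X : Type} [AddCommGroup X] [PartialOrder X]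
    [CovariantClass X X (· + ·) (· ≤ ·)] [Module ℝ X] [PosSMulMono ℝ X] :
    IsPreRiesz X ↔
      ∃ (Y : Type) (_ : AddCommGroup Y) (_ : Lattice Y)
        (_ : CovariantClass Y Y (· + ·) (· ≤ ·)) (_ : Module ℝ Y) (_ : PosSMulMono ℝ Y)
        (i : X →ₗ[ℝ] Y), IsBipositive i ∧ OrderDenseRange i := by
  refine ⟨fun hX => ?_, fun ⟨Y, _, _, _, _, _, i, hi, hd⟩ => hi.isPreRiesz hd⟩
  have : Fact (IsPreRiesz X) := ⟨hX⟩
  exact ⟨RieszCompletion X, inferInstance, inferInstance, inferInstance, inferInstance,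
    inferInstance, RieszCompletion.embed, RieszCompletion.isBipositive_embed,
    RieszCompletion.orderDenseRange_embed⟩

/-- A directed partially ordered vector space `X` is a pre-Riesz space iff
there exist a vector lattice `Y` and a bipositive linear map `i : X → Y` with order
dense range. -/
theorem statement0 {X : Type} [AddCommGroup X] [PartialOrder X]
    [CovariantClass X X (· + ·) (· ≤ ·)] [Module ℝ X] [PosSMulMono ℝ X]
    [IsDirected X (· ≤ ·)] :
    IsPreRiesz X ↔
      ∃ (Y : Type) (_ : AddCommGroup Y) (_ : Lattice Y)
        (_ : CovariantClass Y Y (· + ·) (· ≤ ·)) (_ : Module ℝ Y) (_ : PosSMulMono ℝ Y)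
        (i : X →ₗ[ℝ] Y), IsBipositive i ∧ OrderDenseRange i :=
  statement0_general
end

section
/- Let X be a directed partially ordered vector space with a seminorm p, and let i : X → Y be a bipositive linear map into a directed partially ordered vector space Y such that i(X) is majorizing in Y. Define p_r(y) = inf{p(x) : x ∈ X, -i(x) ≤ y ≤ i(x)}. Then p_r is the greatest regular seminorm on Y satisfying p_r ≤ p on the positive cone of X (identified via i). -/
/-!
The infimum defining `p_r y` runs over the `x` with `-i x ≤ y ≤ i x`. These sets add up under
`y + z` and scale by `|c|` under `c • y`, which makes `p_r` a seminorm once they are nonempty, and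
they are nonempty because `i X` is majorizing and `X` is directed. Each such `x` yields the
element `i x` dominating `y` with `p_r (i x) ≤ p x`, which gives regularity; and each such `x` is
positive (`-i x ≤ i x`), so a regular `q` with `q ∘ i ≤ p` on the cone satisfies
`q y ≤ q (i x) ≤ p x`, which gives maximality.
-/

open Set Filter

section Prelude

variable {E F : Type*}

/-- Archimedean property of a partially ordered group. -/
def ArchimedeanOrder' (E : Type*) [AddCommGroup E] [PartialOrder E] : Prop :=
  ∀ x y : E, (∀ n : ℕ, n • x ≤ y) → x ≤ 0

end Prelude

section RegularExtension

open scoped Pointwise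

variable {E F : Type*} [AddCommGroup E] [AddCommGroup F] [PartialOrder F] [Module ℝ E] [Module ℝ F]

theorem Seminorm.bddBelow_image (p : Seminorm ℝ E) (s : Set E) : BddBelow (p '' s) :=
  ⟨0, by rintro _ ⟨x, -, rfl⟩; exact apply_nonneg p x⟩

theorem nonneg_of_neg_le_self [AddLeftMono F] [PosSMulMono ℝ F] {a : F} (h : -a ≤ a) :
    0 ≤ a := by
  have h2 : (0 : F) ≤ (2 : ℝ) • a := by
    rw [two_smul]
    simpa using add_le_add_right h a
  simpa [smul_smul] using smul_nonneg (by norm_num : (0 : ℝ) ≤ 2⁻¹) h2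

theorem IsBipositive.monotone [PartialOrder E] [AddLeftMono E] [AddLeftMono F]
    {i : E →ₗ[ℝ] F} (hbi : IsBipositive i) : Monotone i := fun a b hab => by
  simpa using (hbi (b - a)).1 (sub_nonneg.2 hab)

theorem IsRegularSeminorm.apply_le {q : Seminorm ℝ F} (hq : IsRegularSeminorm q) {y z : F}
    (h₁ : -z ≤ y) (h₂ : y ≤ z) : q y ≤ q z :=
  (hq y).trans_le (csInf_le (q.bddBelow_image _) ⟨z, ⟨h₁, h₂⟩, rfl⟩)

variable (i : E →ₗ[ℝ] F)

def absMajorants (y : F) : Set E :=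
  {x | -(i x) ≤ y ∧ y ≤ i x}

variable {i}

theorem MajorizingRange.absMajorants_nonempty [PartialOrder E] [IsDirected E (· ≤ ·)]
    [AddLeftMono F] (hi : Monotone i) (hmaj : MajorizingRange i) (y : F) :
    (absMajorants i y).Nonempty := by
  obtain ⟨a, ha⟩ := hmaj y
  obtain ⟨b, hb⟩ := hmaj (-y)
  obtain ⟨c, hac, hbc⟩ := exists_ge_ge a b
  exact ⟨c, neg_le.1 (hb.trans (hi hbc)), ha.trans (hi hac)⟩

theorem absMajorants_neg [AddLeftMono F] (y : F) : absMajorants i (-y) = absMajorants i y := by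
  ext x
  exact ⟨fun ⟨h₁, h₂⟩ => ⟨neg_le.1 h₂, neg_le_neg_iff.1 h₁⟩,
    fun ⟨h₁, h₂⟩ => ⟨neg_le_neg_iff.2 h₂, neg_le.1 h₁⟩⟩

theorem add_mem_absMajorants [AddLeftMono F] {x x' : E} {y z : F} (hx : x ∈ absMajorants i y)
    (hx' : x' ∈ absMajorants i z) : x + x' ∈ absMajorants i (y + z) := by
  refine ⟨?_, ?_⟩
  · rw [map_add, neg_add]
    exact add_le_add hx.1 hx'.1
  · rw [map_add]
    exact add_le_add hx.2 hx'.2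

theorem smul_mem_absMajorants_of_nonneg [PosSMulMono ℝ F] {c : ℝ} (hc : 0 ≤ c) {x : E} {y : F}
    (hx : x ∈ absMajorants i y) : c • x ∈ absMajorants i (c • y) := by
  refine ⟨?_, ?_⟩
  · simpa only [map_smul, smul_neg] using smul_le_smul_of_nonneg_left hx.1 hc
  · simpa only [map_smul] using smul_le_smul_of_nonneg_left hx.2 hc

theorem smul_mem_absMajorants [AddLeftMono F] [PosSMulMono ℝ F] (c : ℝ) {x : E} {y : F}
    (hx : x ∈ absMajorants i y) : |c| • x ∈ absMajorants i (c • y) := by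
  rcases abs_choice c with hc | hc
  · simpa [hc] using smul_mem_absMajorants_of_nonneg (abs_nonneg c) hx
  · have hy : c • y = |c| • -y := by simp [hc]
    rw [hy]
    exact smul_mem_absMajorants_of_nonneg (abs_nonneg c) (by rwa [absMajorants_neg])

theorem absMajorants_subset [AddLeftMono F] {y z : F} (h₁ : -z ≤ y) (h₂ : y ≤ z) :
    absMajorants i z ⊆ absMajorants i y :=
  fun _ hx => ⟨(neg_le_neg_iff.2 hx.2).trans h₁, h₂.trans hx.2⟩

theorem mem_absMajorants_self {x : E} {y : F} (hx : x ∈ absMajorants i y) :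
    x ∈ absMajorants i (i x) :=
  ⟨hx.1.trans hx.2, le_rfl⟩

theorem IsBipositive.nonneg_of_mem_absMajorants [PartialOrder E] [AddLeftMono F]
    [PosSMulMono ℝ F] (hbi : IsBipositive i) {x : E} {y : F} (hx : x ∈ absMajorants i y) :
    0 ≤ x :=
  (hbi x).2 (nonneg_of_neg_le_self (hx.1.trans hx.2))

variable [PartialOrder E] {p : Seminorm ℝ E}

theorem regExt_le {x : E} {y : F} (hx : x ∈ absMajorants i y) : regExt p i y ≤ p x :=
  csInf_le (p.bddBelow_image _) ⟨x, hx, rfl⟩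

theorem le_regExt {y : F} {c : ℝ} (hne : (absMajorants i y).Nonempty)
    (h : ∀ x ∈ absMajorants i y, c ≤ p x) : c ≤ regExt p i y :=
  le_csInf (hne.image p) (by rintro _ ⟨x, hx, rfl⟩; exact h x hx)

theorem regExt_nonneg (y : F) : 0 ≤ regExt p i y :=
  Real.sInf_nonneg (by rintro _ ⟨x, -, rfl⟩; exact apply_nonneg p x)

theorem regExt_zero : regExt p i 0 = 0 :=
  le_antisymm ((regExt_le (x := 0) ⟨by simp, by simp⟩).trans_eq (map_zero p)) (regExt_nonneg 0)

theorem regExt_add_le [AddLeftMono F] {y z : F} (hy : (absMajorants i y).Nonempty)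
    (hz : (absMajorants i z).Nonempty) : regExt p i (y + z) ≤ regExt p i y + regExt p i z :=
  calc regExt p i (y + z) ≤ sInf (p '' absMajorants i y + p '' absMajorants i z) := by
        refine le_csInf ((hy.image p).add (hz.image p)) ?_
        rintro _ ⟨_, ⟨x, hx, rfl⟩, _, ⟨x', hx', rfl⟩, rfl⟩
        exact (regExt_le (add_mem_absMajorants hx hx')).trans (map_add_le_add p x x')
    _ = regExt p i y + regExt p i z :=
        csInf_add (hy.image p) (p.bddBelow_image _) (hz.image p) (p.bddBelow_image _)

theorem regExt_smul_le [AddLeftMono F] [PosSMulMono ℝ F] {y : F}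
    (hy : (absMajorants i y).Nonempty) (c : ℝ) : regExt p i (c • y) ≤ |c| * regExt p i y :=
  calc regExt p i (c • y) ≤ sInf (|c| • p '' absMajorants i y) := by
        refine le_csInf (hy.image p).smul_set ?_
        rintro _ ⟨_, ⟨x, hx, rfl⟩, rfl⟩
        simpa [map_smul_eq_mul] using regExt_le (p := p) (smul_mem_absMajorants c hx)
    _ = |c| * regExt p i y := Real.sInf_smul_of_nonneg (abs_nonneg c) _

theorem regExt_apply_le [AddLeftMono F] {x : E} (hx : 0 ≤ i x) : regExt p i (i x) ≤ p x :=
  regExt_le ⟨(neg_nonpos.2 hx).trans hx, le_rfl⟩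

noncomputable def regExtSeminorm [AddLeftMono F] [PosSMulMono ℝ F] (p : Seminorm ℝ E)
    (i : E →ₗ[ℝ] F) (hne : ∀ y, (absMajorants i y).Nonempty) : Seminorm ℝ F :=
  .ofSMulLE (regExt p i) regExt_zero (fun y z => regExt_add_le (hne y) (hne z))
    fun c y => by simpa only [Real.norm_eq_abs] using regExt_smul_le (hne y) c

theorem regExtSeminorm_apply [AddLeftMono F] [PosSMulMono ℝ F]
    (hne : ∀ y, (absMajorants i y).Nonempty) (y : F) :
    regExtSeminorm p i hne y = regExt p i y :=
  rfl

theorem isRegularSeminorm_regExtSeminorm [AddLeftMono F] [PosSMulMono ℝ F]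
    (hne : ∀ y, (absMajorants i y).Nonempty) : IsRegularSeminorm (regExtSeminorm p i hne) := by
  intro y
  obtain ⟨x₀, hx₀⟩ := hne y
  refine le_antisymm (le_csInf ⟨_, i x₀, hx₀, rfl⟩ ?_) (le_regExt ⟨x₀, hx₀⟩ fun x hx => ?_)
  · rintro _ ⟨z, ⟨h₁, h₂⟩, rfl⟩
    exact le_regExt (hne z) fun x hx => regExt_le (absMajorants_subset h₁ h₂ hx)
  · exact (csInf_le (Seminorm.bddBelow_image _ _) ⟨i x, hx, rfl⟩).trans
      (regExt_le (mem_absMajorants_self hx))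

theorem IsRegularSeminorm.le_regExt [AddLeftMono F] [PosSMulMono ℝ F] {q : Seminorm ℝ F}
    (hq : IsRegularSeminorm q) (hbi : IsBipositive i) (hle : ∀ x, 0 ≤ x → q (i x) ≤ p x)
    {y : F} (hy : (absMajorants i y).Nonempty) : q y ≤ regExt p i y :=
  _root_.le_regExt hy fun x hx =>
    (hq.apply_le hx.1 hx.2).trans (hle x (hbi.nonneg_of_mem_absMajorants hx))

end RegularExtension

theorem statement1_general {X Y : Type*}
    [AddCommGroup X] [PartialOrder X] [CovariantClass X X (· + ·) (· ≤ ·)]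
    [Module ℝ X] [IsDirected X (· ≤ ·)]
    [AddCommGroup Y] [PartialOrder Y] [CovariantClass Y Y (· + ·) (· ≤ ·)]
    [Module ℝ Y] [PosSMulMono ℝ Y]
    (p : Seminorm ℝ X) (i : X →ₗ[ℝ] Y)
    (hbi : IsBipositive i) (hmaj : MajorizingRange i) :
    ∃ q : Seminorm ℝ Y, (∀ y : Y, q y = regExt p i y) ∧ IsRegularSeminorm q ∧
      (∀ x : X, 0 ≤ x → q (i x) ≤ p x) ∧
      (∀ q' : Seminorm ℝ Y, IsRegularSeminorm q' → (∀ x : X, 0 ≤ x → q' (i x) ≤ p x) →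
        ∀ y : Y, q' y ≤ q y) := by
  have hne := hmaj.absMajorants_nonempty hbi.monotone
  exact ⟨regExtSeminorm p i hne, regExtSeminorm_apply hne, isRegularSeminorm_regExtSeminorm hne,
    fun x hx => regExt_apply_le ((hbi x).1 hx),
    fun q hq hle y => hq.le_regExt hbi hle (hne y)⟩

/-- the regular extension `p_r` is the greatest regular seminorm on `Y`
with `p_r ≤ p` on the positive cone of `X`. -/
theorem statement1 {X Y : Type*}
    [AddCommGroup X] [PartialOrder X] [CovariantClass X X (· + ·) (· ≤ ·)]
    [Module ℝ X] [PosSMulMono ℝ X] [IsDirected X (· ≤ ·)]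
    [AddCommGroup Y] [PartialOrder Y] [CovariantClass Y Y (· + ·) (· ≤ ·)]
    [Module ℝ Y] [PosSMulMono ℝ Y] [IsDirected Y (· ≤ ·)]
    (p : Seminorm ℝ X) (i : X →ₗ[ℝ] Y)
    (hbi : IsBipositive i) (hmaj : MajorizingRange i) :
    ∃ q : Seminorm ℝ Y, (∀ y : Y, q y = regExt p i y) ∧ IsRegularSeminorm q ∧
      (∀ x : X, 0 ≤ x → q (i x) ≤ p x) ∧
      (∀ q' : Seminorm ℝ Y, IsRegularSeminorm q' → (∀ x : X, 0 ≤ x → q' (i x) ≤ p x) →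
        ∀ y : Y, q' y ≤ q y) :=
  statement1_general p i hbi hmaj
end

section
/- With the setting of the regular extension seminorm p_r(y) = inf{p(x) : x ∈ X, -i(x) ≤ y ≤ i(x)}: p_r agrees with p on the positive cone of X if and only if p is monotone; moreover, if p is monotone then p_r ≥ (1/2)p on X. -/
open Set Filter

/-! Since `i` is bipositive, `-i x' ≤ i x ≤ i x'` just says `-x' ≤ x ≤ x'`, so `p_r ∘ i` is the
regularization `regExt p LinearMap.id` of `p` inside `X`; both claims are then statements about
the infimum of `p x'` over the `x'` with `-x' ≤ x ≤ x'`. -/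

namespace IsBipositive

variable {E F : Type*} [AddCommGroup E] [PartialOrder E] [AddLeftMono E] [Module ℝ E]
  [AddCommGroup F] [PartialOrder F] [AddLeftMono F] [Module ℝ F] {i : E →ₗ[ℝ] F}

theorem map_le_map_iff_s2 (hi : IsBipositive i) {a b : E} : i a ≤ i b ↔ a ≤ b := by
  rw [← sub_nonneg, ← map_sub, ← hi, sub_nonneg]

theorem regExt_apply (hi : IsBipositive i) (p : Seminorm ℝ E) (x : E) :
    regExt p i (i x) = regExt p LinearMap.id x := by
  simp only [regExt, LinearMap.id_apply, ← map_neg, hi.map_le_map_iff_s2]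

end IsBipositive

section Regularization

variable {E : Type*} [AddCommGroup E] [PartialOrder E] [Module ℝ E] (p : Seminorm ℝ E)

theorem regExt_id_le {x y : E} (h₁ : -y ≤ x) (h₂ : x ≤ y) :
    regExt p LinearMap.id x ≤ p y :=
  csInf_le ⟨0, by rintro _ ⟨z, -, rfl⟩; exact apply_nonneg p z⟩ ⟨y, ⟨h₁, h₂⟩, rfl⟩

theorem le_regExt_id [AddLeftMono E] [IsDirected E (· ≤ ·)] {x : E} {c : ℝ}
    (h : ∀ y, -y ≤ x → x ≤ y → c ≤ p y) : c ≤ regExt p LinearMap.id x := by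
  obtain ⟨y, hy₁, hy₂⟩ := directed_of (· ≤ ·) (-x) x
  refine le_csInf ⟨p y, y, ⟨neg_le.mp hy₁, hy₂⟩, rfl⟩ ?_
  rintro _ ⟨z, ⟨hz₁, hz₂⟩, rfl⟩
  exact h z hz₁ hz₂

theorem regExt_id_eq_on_nonneg_iff [AddLeftMono E] [IsDirected E (· ≤ ·)] :
    (∀ x : E, 0 ≤ x → regExt p LinearMap.id x = p x) ↔ IsMonotoneSeminorm p := by
  constructor
  · intro h x y hx hxy
    rw [← h x hx]
    exact regExt_id_le p ((neg_nonpos.mpr (hx.trans hxy)).trans hx) hxy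
  · intro hm x hx
    refine le_antisymm (regExt_id_le p ((neg_nonpos.mpr hx).trans hx) le_rfl) ?_
    exact le_regExt_id p fun y _ hxy => hm x y hx hxy

variable {p}

/-- Both `y + x` and `y - x` lie in `[0, 2y]`, and `2x` is their difference. -/
theorem IsMonotoneSeminorm.le_two_mul_of_neg_le_of_le [AddLeftMono E]
    (hm : IsMonotoneSeminorm p) {x y : E} (h₁ : -y ≤ x) (h₂ : x ≤ y) : p x ≤ 2 * p y := by
  have hbound : ∀ z, 0 ≤ z → z ≤ (2 : ℝ) • y → p z ≤ 2 * p y := fun z hz hzy => by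
    simpa [map_smul_eq_mul] using hm z _ hz hzy
  have hplus : p (y + x) ≤ 2 * p y :=
    hbound _ (neg_le_iff_add_nonneg'.mp h₁) (by rw [two_smul]; gcongr)
  have hminus : p (y - x) ≤ 2 * p y :=
    hbound _ (sub_nonneg.mpr h₂) (by rw [two_smul, sub_eq_add_neg]; gcongr; exact neg_le.mp h₁)
  have htwo : (2 : ℝ) • x = (y + x) - (y - x) := by rw [two_smul]; abel
  have hdouble : 2 * p x ≤ p (y + x) + p (y - x) := by
    have htriangle := map_sub_le_add p (y + x) (y - x)
    rwa [← htwo, map_smul_eq_mul, Real.norm_two] at htriangle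
  linarith

theorem IsMonotoneSeminorm.half_le_regExt_id [AddLeftMono E] [IsDirected E (· ≤ ·)]
    (hm : IsMonotoneSeminorm p) (x : E) : (1 / 2 : ℝ) * p x ≤ regExt p LinearMap.id x :=
  le_regExt_id p fun _ h₁ h₂ => by linarith [hm.le_two_mul_of_neg_le_of_le h₁ h₂]

end Regularization

theorem statement2_general {X Y : Type*}
    [AddCommGroup X] [PartialOrder X] [CovariantClass X X (· + ·) (· ≤ ·)]
    [Module ℝ X] [IsDirected X (· ≤ ·)]
    [AddCommGroup Y] [PartialOrder Y] [CovariantClass Y Y (· + ·) (· ≤ ·)]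
    [Module ℝ Y]
    (p : Seminorm ℝ X) (i : X →ₗ[ℝ] Y)
    (hbi : IsBipositive i) :
    ((∀ x : X, 0 ≤ x → regExt p i (i x) = p x) ↔ IsMonotoneSeminorm p) ∧
      (IsMonotoneSeminorm p → ∀ x : X, (1 / 2 : ℝ) * p x ≤ regExt p i (i x)) := by
  simp only [hbi.regExt_apply]
  exact ⟨regExt_id_eq_on_nonneg_iff p, IsMonotoneSeminorm.half_le_regExt_id⟩

/-- `p_r` agrees with `p` on the positive cone of `X` iff `p` is monotone;
moreover if `p` is monotone then `p_r ≥ (1/2) p` on `X`. -/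
theorem statement2 {X Y : Type*}
    [AddCommGroup X] [PartialOrder X] [CovariantClass X X (· + ·) (· ≤ ·)]
    [Module ℝ X] [PosSMulMono ℝ X] [IsDirected X (· ≤ ·)]
    [AddCommGroup Y] [PartialOrder Y] [CovariantClass Y Y (· + ·) (· ≤ ·)]
    [Module ℝ Y] [PosSMulMono ℝ Y] [IsDirected Y (· ≤ ·)]
    (p : Seminorm ℝ X) (i : X →ₗ[ℝ] Y)
    (hbi : IsBipositive i) (hmaj : MajorizingRange i) :
    ((∀ x : X, 0 ≤ x → regExt p i (i x) = p x) ↔ IsMonotoneSeminorm p) ∧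
      (IsMonotoneSeminorm p → ∀ x : X, (1 / 2 : ℝ) * p x ≤ regExt p i (i x)) :=
  statement2_general p i hbi
end

section
/- Let X be a directed Archimedean partially ordered vector space with a regular norm ‖·‖ such that X⁺ is norm closed, and let (X^δ, i) be its Dedekind completion with ‖y‖_r = inf{‖x‖ : x ∈ X⁺, -i(x) ≤ y ≤ i(x)}. If (X, ‖·‖) is norm complete, then (X^δ, ‖·‖_r) is norm complete. -/
open Set Filter

section Prelude

variable {E F : Type*}

/-- Archimedean property of a partially ordered group. -/
def ArchimedeanOrderPOVS (E : Type*) [AddCommGroup E] [PartialOrder E] : Prop :=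
  ∀ x y : E, (∀ n : ℕ, n • x ≤ y) → x ≤ 0

end Prelude

/-- The regular extension norm on the Dedekind completion, taking positive
majorants from `X`. -/
noncomputable def drNorm {X Z : Type*} [Norm X] [AddCommGroup X] [PartialOrder X]
    [AddCommGroup Z] [PartialOrder Z] [Module ℝ X] [Module ℝ Z]
    (i : X →ₗ[ℝ] Z) (z : Z) : ℝ :=
  sInf {r : ℝ | ∃ x : X, 0 ≤ x ∧ -(i x) ≤ z ∧ z ≤ i x ∧ r = ‖x‖}

/-!
Pass to a subsequence `f (φ k)` whose consecutive differences are bracketed by `±i x_k` with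
`0 ≤ x_k` and `‖x_k‖ < 2⁻ᵏ`. Since `X` is complete, the tails `s_k = ∑_{n ≥ k} x_n` exist; they
are positive because the cone is closed, and `‖s_k‖ ≤ 2 · 2⁻ᵏ`. Then `f (φ k) - i s_k` increases
and `f (φ k) + i s_k` decreases, so Dedekind completeness yields `z` between them, whence
`‖f (φ k) - z‖_r ≤ ‖s_k‖ → 0`; a Cauchy sequence with a convergent subsequence converges.
-/

theorem DedekindComplete.exists_between_of_monotone_antitone {α : Type*} [Preorder α]
    (hded : DedekindComplete α) {l u : ℕ → α} (hl : Monotone l) (hu : Antitone u)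
    (hlu : ∀ k, l k ≤ u k) : ∃ z, ∀ k, l k ≤ z ∧ z ≤ u k := by
  have hbdd : ∀ k m, l k ≤ u m := fun k m =>
    (hl (le_max_left k m)).trans ((hlu _).trans (hu (le_max_right k m)))
  obtain ⟨z, hz⟩ := hded (Set.range l) (Set.range_nonempty l)
    ⟨u 0, by rintro _ ⟨k, rfl⟩; exact hbdd k 0⟩
  exact ⟨z, fun k => ⟨hz.1 ⟨k, rfl⟩, hz.2 (by rintro _ ⟨m, rfl⟩; exact hbdd m k)⟩⟩

theorem DedekindComplete.exists_bracket_limit {Z : Type*} [AddCommGroup Z] [PartialOrder Z]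
    [AddLeftMono Z] (hded : DedekindComplete Z) {g t : ℕ → Z}
    (hlo : ∀ k, -(t k - t (k + 1)) ≤ g (k + 1) - g k)
    (hhi : ∀ k, g (k + 1) - g k ≤ t k - t (k + 1)) (ht : ∀ k, 0 ≤ t k) :
    ∃ z, ∀ k, -t k ≤ g k - z ∧ g k - z ≤ t k := by
  have hl : Monotone fun k => g k - t k := monotone_nat_of_le_succ fun k => by
    have h := hlo k
    rw [neg_sub, sub_le_sub_iff] at h
    rwa [sub_le_sub_iff, add_comm]
  have hu : Antitone fun k => g k + t k := antitone_nat_of_succ_le fun k => by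
    have h := hhi k
    rw [sub_le_sub_iff] at h
    rwa [add_comm (g k)]
  obtain ⟨z, hz⟩ := hded.exists_between_of_monotone_antitone hl hu fun k =>
    (sub_le_self _ (ht k)).trans (le_add_of_nonneg_right (ht k))
  exact ⟨z, fun k => ⟨neg_le_sub_iff_le_add.2 (hz k).2, sub_le_comm.1 (hz k).1⟩⟩

theorem exists_nonneg_tails {X : Type*} [NormedAddCommGroup X] [CompleteSpace X]
    [PartialOrder X] [AddLeftMono X] (hclosed : IsClosed {x : X | 0 ≤ x}) {x : ℕ → X}
    (hx : ∀ k, 0 ≤ x k) (hxn : ∀ k, ‖x k‖ ≤ (1 / 2) ^ k) :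
    ∃ s : ℕ → X, (∀ k, x k = s k - s (k + 1)) ∧ (∀ k, 0 ≤ s k) ∧
      ∀ k, ‖s k‖ ≤ 2 * (1 / 2) ^ k := by
  have hsum : Summable x := .of_norm_bounded summable_geometric_two hxn
  refine ⟨fun k => ∑' n, x (n + k), fun k => ?_, fun k => ?_, fun k => ?_⟩
  · show x k = ∑' n, x (n + k) - ∑' n, x (n + (k + 1))
    rw [((summable_nat_add_iff k).2 hsum).tsum_eq_zero_add, zero_add]
    simp only [add_right_comm _ 1 k, add_assoc, add_sub_cancel_right]
  · exact tsum_mem (s := AddSubmonoid.nonneg X) hclosed fun n => hx (n + k)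
  · refine tsum_of_norm_bounded (hasSum_geometric_two.mul_right ((1 / 2) ^ k)) fun n => ?_
    simpa only [pow_add] using hxn (n + k)

section Bracket

variable {X Z : Type*} [AddCommGroup X] [PartialOrder X] [AddCommGroup Z] [Lattice Z]
  [AddLeftMono Z] [Module ℝ X] [Module ℝ Z] {i : X →ₗ[ℝ] Z}

theorem exists_nonneg_bracket (hbi : IsBipositive i) (hod : OrderDenseRange i) (w : Z) :
    ∃ x : X, 0 ≤ x ∧ -(i x) ≤ w ∧ w ≤ i x := by
  set v : Z := w ⊔ -w ⊔ 0
  have hwv : w ≤ v := le_sup_left.trans le_sup_left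
  have hnwv : -w ≤ v := le_sup_right.trans le_sup_left
  obtain ⟨_, ⟨x, rfl⟩, hvx⟩ : ∃ z ∈ Set.range i, v ≤ z := by
    by_contra! h
    -- otherwise `v` is the infimum of the empty set, hence a top element
    have hv_top : v + v ≤ v := (hod v).2 fun z hz => absurd hz.2 (h z hz.1)
    exact h 0 ⟨0, map_zero i⟩ (add_le_iff_nonpos_left.mp hv_top)
  exact ⟨x, (hbi x).2 (le_sup_right.trans hvx), neg_le.1 (hnwv.trans hvx), hwv.trans hvx⟩

end Bracket

theorem drNorm_le_of_bracket {X Z : Type*} [SeminormedAddCommGroup X] [PartialOrder X]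
    [Module ℝ X] [AddCommGroup Z] [PartialOrder Z] [Module ℝ Z] {i : X →ₗ[ℝ] Z} {w : Z} {x : X}
    (hx : 0 ≤ x) (hlo : -(i x) ≤ w) (hhi : w ≤ i x) : drNorm i w ≤ ‖x‖ :=
  csInf_le ⟨0, by rintro _ ⟨y, -, -, -, rfl⟩; exact norm_nonneg y⟩ ⟨x, hx, hlo, hhi, rfl⟩

section DrNorm

variable {X Z : Type*} [SeminormedAddCommGroup X] [PartialOrder X] [AddCommGroup Z] [Lattice Z]
  [AddLeftMono Z] [Module ℝ X] [Module ℝ Z] {i : X →ₗ[ℝ] Z}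

theorem exists_bracket_of_drNorm_lt (hbi : IsBipositive i) (hod : OrderDenseRange i) {w : Z}
    {ε : ℝ} (h : drNorm i w < ε) : ∃ x : X, 0 ≤ x ∧ -(i x) ≤ w ∧ w ≤ i x ∧ ‖x‖ < ε := by
  obtain ⟨x, hx, hlo, hhi⟩ := exists_nonneg_bracket hbi hod w
  obtain ⟨_, ⟨y, hy, hlo, hhi, rfl⟩, hlt⟩ :=
    exists_lt_of_csInf_lt (by exact ⟨‖x‖, x, hx, hlo, hhi, rfl⟩) h
  exact ⟨y, hy, hlo, hhi, hlt⟩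

theorem drNorm_add_le [AddLeftMono X] (hbi : IsBipositive i) (hod : OrderDenseRange i)
    (v w : Z) : drNorm i (v + w) ≤ drNorm i v + drNorm i w := by
  refine le_of_forall_pos_lt_add fun ε hε => ?_
  obtain ⟨x, hx, hxlo, hxhi, hxε⟩ :=
    exists_bracket_of_drNorm_lt hbi hod (lt_add_of_pos_right (drNorm i v) (half_pos hε))
  obtain ⟨y, hy, hylo, hyhi, hyε⟩ :=
    exists_bracket_of_drNorm_lt hbi hod (lt_add_of_pos_right (drNorm i w) (half_pos hε))
  calc drNorm i (v + w) ≤ ‖x + y‖ :=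
        drNorm_le_of_bracket (add_nonneg hx hy)
          (by rw [map_add, neg_add]; exact add_le_add hxlo hylo)
          (by rw [map_add]; exact add_le_add hxhi hyhi)
    _ ≤ ‖x‖ + ‖y‖ := norm_add_le x y
    _ < drNorm i v + drNorm i w + ε := by linarith

end DrNorm

theorem statement10_general {X Z : Type*}
    [NormedAddCommGroup X] [NormedSpace ℝ X] [PartialOrder X]
    [CovariantClass X X (· + ·) (· ≤ ·)]
    [AddCommGroup Z] [Lattice Z] [CovariantClass Z Z (· + ·) (· ≤ ·)]
    [Module ℝ Z]
    (hclosed : IsClosed {x : X | 0 ≤ x})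
    (i : X →ₗ[ℝ] Z) (hbi : IsBipositive i) (hod : OrderDenseRange i)
    (hded : DedekindComplete Z)
    (hcomplete : CompleteSpace X) :
    ∀ f : ℕ → Z,
      (∀ ε : ℝ, 0 < ε → ∃ N : ℕ, ∀ m n : ℕ, N ≤ m → N ≤ n → drNorm i (f m - f n) < ε) →
      ∃ z : Z, ∀ ε : ℝ, 0 < ε → ∃ N : ℕ, ∀ n : ℕ, N ≤ n → drNorm i (f n - z) < ε := by
  intro f hf
  obtain ⟨φ, hφ, hφf⟩ : ∃ φ : ℕ → ℕ, StrictMono φ ∧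
      ∀ k n, φ k ≤ n → drNorm i (f n - f (φ k)) < (1 / 2) ^ k :=
    extraction_forall_of_eventually' fun k => by
      obtain ⟨N, hN⟩ := hf ((1 / 2) ^ k) (by positivity)
      exact ⟨N, fun m hm n hmn => hN n m (hm.trans hmn) hm⟩
  choose x hx hxlo hxhi hxn using fun k =>
    exists_bracket_of_drNorm_lt hbi hod (hφf k (φ (k + 1)) (hφ.monotone k.le_succ))
  obtain ⟨s, hxs, hs, hsn⟩ := exists_nonneg_tails hclosed hx fun k => (hxn k).le
  obtain ⟨z, hz⟩ := hded.exists_bracket_limit (g := fun k => f (φ k)) (t := fun k => i (s k))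
    (fun k => by simpa only [hxs, map_sub] using hxlo k)
    (fun k => by simpa only [hxs, map_sub] using hxhi k) fun k => (hbi _).1 (hs k)
  refine ⟨z, fun ε hε => ?_⟩
  obtain ⟨K, hK⟩ := exists_pow_lt_of_lt_one (by positivity : 0 < ε / 3)
    (by norm_num : (1 / 2 : ℝ) < 1)
  refine ⟨φ K, fun n hn => ?_⟩
  calc drNorm i (f n - z) = drNorm i ((f n - f (φ K)) + (f (φ K) - z)) := by
        rw [sub_add_sub_cancel]
    _ ≤ drNorm i (f n - f (φ K)) + drNorm i (f (φ K) - z) := drNorm_add_le hbi hod _ _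
    _ < (1 / 2) ^ K + 2 * (1 / 2) ^ K := add_lt_add_of_lt_of_le (hφf K n hn)
        ((drNorm_le_of_bracket (hs K) (hz K).1 (hz K).2).trans (hsn K))
    _ < ε := by linarith

/-- if a directed Archimedean partially ordered vector space `X` with
regular norm and norm closed positive cone is norm complete, then its Dedekind
completion `(X^δ, i)` is complete with respect to the regular extension norm `‖·‖_r`. -/
theorem statement10 {X Z : Type*}
    [NormedAddCommGroup X] [NormedSpace ℝ X] [PartialOrder X]
    [CovariantClass X X (· + ·) (· ≤ ·)] [PosSMulMono ℝ X] [IsDirected X (· ≤ ·)]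
    [AddCommGroup Z] [Lattice Z] [CovariantClass Z Z (· + ·) (· ≤ ·)]
    [Module ℝ Z] [PosSMulMono ℝ Z]
    (harch : ArchimedeanOrderPOVS X)
    (hreg : ∀ x : X, ‖x‖ = sInf {r : ℝ | ∃ y : X, -y ≤ x ∧ x ≤ y ∧ r = ‖y‖})
    (hclosed : IsClosed {x : X | 0 ≤ x})
    (i : X →ₗ[ℝ] Z) (hbi : IsBipositive i) (hod : OrderDenseRange i)
    (hded : DedekindComplete Z)
    (hcomplete : CompleteSpace X) :
    ∀ f : ℕ → Z,
      (∀ ε : ℝ, 0 < ε → ∃ N : ℕ, ∀ m n : ℕ, N ≤ m → N ≤ n → drNorm i (f m - f n) < ε) →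
      ∃ z : Z, ∀ ε : ℝ, 0 < ε → ∃ N : ℕ, ∀ n : ℕ, N ≤ n → drNorm i (f n - z) < ε :=
  statement10_general hclosed i hbi hod hded hcomplete
end

section
/- Let X be an Archimedean Riesz space with an order unit u equipped with the order unit norm ‖·‖_u. Then the norm dual X' is an AL-space. -/
open Set Filter

/-- The dual order on the norm dual of an ordered normed space. -/
def dLe {X : Type*} [NormedAddCommGroup X] [Lattice X] [HasSolidNorm X] [IsOrderedAddMonoid X] [NormedSpace ℝ X]
    (f g : X →L[ℝ] ℝ) : Prop :=
  ∀ x : X, 0 ≤ x → f x ≤ g x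


/-!
The dual is a vector lattice by the Riesz–Kantorovich formula: for a bounded functional `φ`,
`x ↦ sup φ[0, x]` is additive on the positive cone by the Riesz decomposition
`[0, a + b] = [0, a] + [0, b]`, so it extends to a bounded functional `φ⁺`, and
`f ∨ g = g + (f - g)⁺`. The dual of a normed space is complete. Finally, for a positive
functional `f` the order unit norm gives `‖f‖ = f u`, because `-λu ≤ x ≤ λu` forces
`|f x| ≤ λ f u`; since `f ↦ f u` is additive, the norm is additive on the positive cone.
-/

open Topology
open scoped Pointwise

section ConeExtension

variable {G M : Type*} [AddCommGroup G] [Lattice G] [IsOrderedAddMonoid G] [AddCommGroup M]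

lemma Icc_zero_add_eq {a b : G} (ha : 0 ≤ a) (hb : 0 ≤ b) :
    Icc 0 (a + b) = Icc 0 a + Icc 0 b := by
  refine subset_antisymm (fun y hy => ?_) (by simpa using Icc_add_Icc_subset 0 a 0 b)
  refine mem_add.2 ⟨y ⊓ a, ⟨le_inf hy.1 ha, inf_le_right⟩, y - y ⊓ a, ⟨?_, ?_⟩, by abel⟩
  · exact sub_nonneg.2 inf_le_left
  · rw [sub_inf, sub_self]
    exact sup_le hb (sub_le_iff_le_add'.2 hy.2)

def AdditiveOnNonneg (P : G → M) : Prop :=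
  ∀ a b : G, 0 ≤ a → 0 ≤ b → P (a + b) = P a + P b

def coneExtension (P : G → M) (x : G) : M := P x⁺ - P x⁻

variable {P : G → M}

lemma coneExtension_sub_of_nonneg (hP : AdditiveOnNonneg P) {a b : G} (ha : 0 ≤ a)
    (hb : 0 ≤ b) :
    coneExtension P (a - b) = P a - P b := by
  have hsplit : (a - b)⁺ + b = (a - b)⁻ + a := by
    rw [sub_eq_iff_eq_add.1 (posPart_sub_negPart (a - b))]
    abel
  have := congrArg P hsplit
  rw [hP _ _ (posPart_nonneg _) hb, hP _ _ (negPart_nonneg _) ha] at this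
  rw [coneExtension, sub_eq_sub_iff_add_eq_add, this, add_comm]

lemma coneExtension_of_nonneg (hP : AdditiveOnNonneg P) {x : G} (hx : 0 ≤ x) :
    coneExtension P x = P x := by
  have hP0 : P 0 = 0 := by simpa using hP 0 0 le_rfl le_rfl
  simpa [hP0] using coneExtension_sub_of_nonneg hP hx le_rfl

lemma coneExtension_add (hP : AdditiveOnNonneg P) (x y : G) :
    coneExtension P (x + y) = coneExtension P x + coneExtension P y := by
  have hxy : x + y = (x⁺ + y⁺) - (x⁻ + y⁻) := by
    rw [add_sub_add_comm, posPart_sub_negPart, posPart_sub_negPart]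
  rw [hxy, coneExtension_sub_of_nonneg hP (add_nonneg (posPart_nonneg _) (posPart_nonneg _))
      (add_nonneg (negPart_nonneg _) (negPart_nonneg _)),
    hP _ _ (posPart_nonneg _) (posPart_nonneg _), hP _ _ (negPart_nonneg _) (negPart_nonneg _),
    coneExtension, coneExtension]
  abel

def coneExtensionHom (hP : AdditiveOnNonneg P) : G →+ M :=
  AddMonoidHom.mk' (coneExtension P) (coneExtension_add hP)

end ConeExtension

section NormedLattice

variable {X : Type*} [NormedAddCommGroup X] [Lattice X] [HasSolidNorm X] [IsOrderedAddMonoid X]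

lemma norm_le_norm_of_nonneg_of_le {x y : X} (hx : 0 ≤ x) (hxy : x ≤ y) : ‖x‖ ≤ ‖y‖ :=
  norm_le_norm_of_abs_le_abs <| by rwa [abs_of_nonneg hx, abs_of_nonneg (hx.trans hxy)]

lemma norm_posPart_le (x : X) : ‖x⁺‖ ≤ ‖x‖ := by
  rw [← norm_abs_eq_norm x, ← posPart_add_negPart x]
  exact norm_le_norm_of_nonneg_of_le (posPart_nonneg x) (le_add_of_nonneg_right (negPart_nonneg x))

lemma norm_negPart_le (x : X) : ‖x⁻‖ ≤ ‖x‖ := by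
  rw [← norm_abs_eq_norm x, ← posPart_add_negPart x]
  exact norm_le_norm_of_nonneg_of_le (negPart_nonneg x) (le_add_of_nonneg_left (posPart_nonneg x))

end NormedLattice

section DualPosPart

variable {X : Type*} [NormedAddCommGroup X] [Lattice X] [HasSolidNorm X] [IsOrderedAddMonoid X]
  [NormedSpace ℝ X] (φ : X →L[ℝ] ℝ)

noncomputable def rieszKantorovich (x : X) : ℝ := sSup (φ '' Icc 0 x)

lemma image_Icc_zero_le (x : X) : ∀ r ∈ φ '' Icc 0 x, r ≤ ‖φ‖ * ‖x‖ := by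
  rintro _ ⟨y, ⟨hy0, hyx⟩, rfl⟩
  calc φ y ≤ ‖φ y‖ := Real.le_norm_self _
    _ ≤ ‖φ‖ * ‖y‖ := φ.le_opNorm y
    _ ≤ ‖φ‖ * ‖x‖ := by gcongr; exact norm_le_norm_of_nonneg_of_le hy0 hyx

lemma bddAbove_image_Icc_zero (x : X) : BddAbove (φ '' Icc 0 x) :=
  ⟨_, image_Icc_zero_le φ x⟩

lemma le_rieszKantorovich {x y : X} (hy0 : 0 ≤ y) (hyx : y ≤ x) : φ y ≤ rieszKantorovich φ x :=
  le_csSup (bddAbove_image_Icc_zero φ x) (mem_image_of_mem φ ⟨hy0, hyx⟩)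

lemma rieszKantorovich_nonneg {x : X} (hx : 0 ≤ x) : 0 ≤ rieszKantorovich φ x := by
  simpa using le_rieszKantorovich φ le_rfl hx

lemma rieszKantorovich_le {x : X} (hx : 0 ≤ x) : rieszKantorovich φ x ≤ ‖φ‖ * ‖x‖ :=
  csSup_le ((nonempty_Icc.2 hx).image φ) (image_Icc_zero_le φ x)

lemma additiveOnNonneg_rieszKantorovich : AdditiveOnNonneg (rieszKantorovich φ) := by
  intro a b ha hb
  rw [rieszKantorovich, Icc_zero_add_eq ha hb, image_add, csSup_add ((nonempty_Icc.2 ha).image φ)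
    (bddAbove_image_Icc_zero φ a) ((nonempty_Icc.2 hb).image φ) (bddAbove_image_Icc_zero φ b)]
  rfl

lemma norm_coneExtension_rieszKantorovich_le (x : X) :
    ‖coneExtension (rieszKantorovich φ) x‖ ≤ ‖φ‖ * ‖x‖ := by
  have hbound : ∀ {y : X}, 0 ≤ y → ‖y‖ ≤ ‖x‖ →
      0 ≤ rieszKantorovich φ y ∧ rieszKantorovich φ y ≤ ‖φ‖ * ‖x‖ := fun hy hyx =>
    ⟨rieszKantorovich_nonneg φ hy, (rieszKantorovich_le φ hy).trans (by gcongr)⟩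
  obtain ⟨hp0, hpx⟩ := hbound (posPart_nonneg x) (norm_posPart_le x)
  obtain ⟨hn0, hnx⟩ := hbound (negPart_nonneg x) (norm_negPart_le x)
  exact abs_sub_le_of_nonneg_of_le hp0 hpx hn0 hnx

noncomputable def dualPosPart : X →L[ℝ] ℝ :=
  (coneExtensionHom (additiveOnNonneg_rieszKantorovich φ)).toRealLinearMap
    (AddMonoidHomClass.continuous_of_bound _ ‖φ‖ (norm_coneExtension_rieszKantorovich_le φ))

lemma dualPosPart_apply_of_nonneg {x : X} (hx : 0 ≤ x) :
    dualPosPart φ x = rieszKantorovich φ x :=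
  coneExtension_of_nonneg (additiveOnNonneg_rieszKantorovich φ) hx

lemma zero_dLe_dualPosPart : dLe 0 (dualPosPart φ) := fun x hx => by
  simpa [dualPosPart_apply_of_nonneg φ hx] using rieszKantorovich_nonneg φ hx

lemma dLe_dualPosPart : dLe φ (dualPosPart φ) := fun x hx => by
  simpa [dualPosPart_apply_of_nonneg φ hx] using le_rieszKantorovich φ hx le_rfl

lemma dualPosPart_dLe {k : X →L[ℝ] ℝ} (hk₀ : dLe 0 k) (hkφ : dLe φ k) :
    dLe (dualPosPart φ) k := fun x hx => by
  rw [dualPosPart_apply_of_nonneg φ hx]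
  refine csSup_le ((nonempty_Icc.2 hx).image φ) ?_
  rintro _ ⟨y, ⟨hy0, hyx⟩, rfl⟩
  have hxy : 0 ≤ k (x - y) := by simpa using hk₀ _ (sub_nonneg.2 hyx)
  linarith [hkφ y hy0, map_sub k x y]

lemma exists_dLe_sup (f g : X →L[ℝ] ℝ) :
    ∃ h : X →L[ℝ] ℝ, dLe f h ∧ dLe g h ∧ ∀ k : X →L[ℝ] ℝ, dLe f k → dLe g k → dLe h k := by
  refine ⟨g + dualPosPart (f - g), fun x hx => ?_, fun x hx => ?_, fun k hfk hgk x hx => ?_⟩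
  · have := dLe_dualPosPart (f - g) x hx
    simp only [sub_apply] at this
    simp only [add_apply]
    linarith
  · simpa using zero_dLe_dualPosPart (f - g) x hx
  · have := dualPosPart_dLe (f - g) (k := k - g) (fun y hy => by simpa using hgk y hy)
      (fun y hy => by simpa using hfk y hy) x hx
    simp only [sub_apply] at this
    simp only [add_apply]
    linarith

end DualPosPart

lemma dyadic_smul_nonneg {X : Type*} [AddCommGroup X] [Lattice X] [IsOrderedAddMonoid X]
    [Module ℝ X] {x : X} (hx : 0 ≤ x) (m k : ℕ) : 0 ≤ ((k : ℝ) / 2 ^ m) • x := by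
  induction m generalizing k with
  | zero => simpa [Nat.cast_smul_eq_nsmul] using nsmul_nonneg hx k
  | succ m ih =>
    refine nsmul_two_semiclosed ?_
    rw [← Nat.cast_smul_eq_nsmul ℝ, smul_smul]
    convert ih k using 2
    push_cast
    ring

section SolidNormSMul

variable {X : Type*} [NormedAddCommGroup X] [Lattice X] [HasSolidNorm X] [IsOrderedAddMonoid X]
  [NormedSpace ℝ X]

/-- Positivity of scalar multiples is automatic: dyadic multiples of a positive element are
positive, and the positive cone is closed. -/
instance HasSolidNorm.posSMulMono : PosSMulMono ℝ X := by
  refine PosSMulMono.of_smul_nonneg fun c hc x hx => ?_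
  have hdyadic : Tendsto (fun n : ℕ => ((⌊c * 2 ^ n⌋₊ : ℝ) / 2 ^ n)) atTop (𝓝 c) :=
    (tendsto_nat_floor_mul_div_atTop hc).comp (tendsto_pow_atTop_atTop_of_one_lt one_lt_two)
  exact isClosed_le continuous_const continuous_id |>.mem_of_tendsto
    (hdyadic.smul_const x) (Eventually.of_forall fun n => dyadic_smul_nonneg hx n _)

end SolidNormSMul

section OrderUnitNorm

variable {X : Type*} [AddCommGroup X] [PartialOrder X] [Module ℝ X] [PosSMulMono ℝ X] {u : X}

lemma IsOrderUnit.nonneg (hu : IsOrderUnit u) : 0 ≤ u := by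
  obtain ⟨l, hl, hlu⟩ := hu 0
  simpa [inv_smul_smul₀ hl.ne'] using smul_nonneg (inv_nonneg.2 hl.le) hlu

variable [IsOrderedAddMonoid X]

lemma IsOrderUnit.exists_mem_Icc (hu : IsOrderUnit u) (x : X) :
    ∃ l : ℝ, 0 < l ∧ -(l • u) ≤ x ∧ x ≤ l • u := by
  obtain ⟨l₁, hl₁, hx₁⟩ := hu x
  obtain ⟨l₂, hl₂, hx₂⟩ := hu (-x)
  refine ⟨l₁ + l₂, add_pos hl₁ hl₂, neg_le.1 (hx₂.trans ?_), hx₁.trans ?_⟩ <;> rw [add_smul]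
  · exact le_add_of_nonneg_left (smul_nonneg hl₁.le hu.nonneg)
  · exact le_add_of_nonneg_right (smul_nonneg hl₂.le hu.nonneg)

lemma unitNorm_self_le_one (hu : IsOrderUnit u) : unitNorm u u ≤ 1 :=
  csInf_le ⟨0, fun _ hl => hl.1.le⟩
    ⟨one_pos, by simpa using (neg_nonpos.2 hu.nonneg).trans hu.nonneg, (one_smul ℝ u).ge⟩

lemma abs_le_apply_mul_unitNorm (hu : IsOrderUnit u) {f : X →ₗ[ℝ] ℝ}
    (hf : ∀ x, 0 ≤ x → 0 ≤ f x) (x : X) : |f x| ≤ f u * unitNorm u x := by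
  have hfmono : Monotone f := fun a b hab => by simpa using hf (b - a) (sub_nonneg.2 hab)
  have hfu : 0 ≤ f u := hf u hu.nonneg
  obtain ⟨l, hl⟩ := hu.exists_mem_Icc x
  rw [unitNorm, ← smul_eq_mul, ← Real.sInf_smul_of_nonneg hfu]
  refine le_csInf ⟨_, smul_mem_smul_set (a := f u) hl⟩ ?_
  rintro _ ⟨l, ⟨-, hlx, hxl⟩, rfl⟩
  have hlower := hfmono hlx
  have hupper := hfmono hxl
  simp only [map_neg, map_smul, smul_eq_mul] at hlower hupper ⊢
  rw [abs_le]
  constructor <;> linarith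

end OrderUnitNorm

lemma opNorm_eq_apply_of_nonneg {X : Type*} [NormedAddCommGroup X] [PartialOrder X]
    [IsOrderedAddMonoid X] [NormedSpace ℝ X] [PosSMulMono ℝ X] {u : X} (hu : IsOrderUnit u)
    (hnorm : ∀ x : X, ‖x‖ = unitNorm u x)
    {f : X →L[ℝ] ℝ} (hf : ∀ x, 0 ≤ x → 0 ≤ f x) : ‖f‖ = f u := by
  refine le_antisymm (f.opNorm_le_bound (hf u hu.nonneg) fun x => ?_) ?_
  · rw [Real.norm_eq_abs, hnorm]
    exact abs_le_apply_mul_unitNorm hu (f := f.toLinearMap) hf x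
  · calc f u ≤ ‖f u‖ := Real.le_norm_self _
      _ ≤ ‖f‖ * ‖u‖ := f.le_opNorm u
      _ ≤ ‖f‖ * 1 := by gcongr; exact (hnorm u).trans_le (unitNorm_self_le_one hu)
      _ = ‖f‖ := mul_one _

theorem statement12_general {X : Type*} [NormedAddCommGroup X] [Lattice X] [HasSolidNorm X] [IsOrderedAddMonoid X] [NormedSpace ℝ X]
    (u : X) (hu : IsOrderUnit u)
    (hnorm : ∀ x : X, ‖x‖ = unitNorm u x) :
    -- the dual is a lattice in the dual order
    (∀ f g : X →L[ℝ] ℝ, ∃ h : X →L[ℝ] ℝ, dLe f h ∧ dLe g h ∧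
      ∀ k : X →L[ℝ] ℝ, dLe f k → dLe g k → dLe h k) ∧
    -- the dual is norm complete
    CompleteSpace (X →L[ℝ] ℝ) ∧
    -- the AL-property: the norm is additive on disjoint positive functionals
    (∀ f g : X →L[ℝ] ℝ, dLe 0 f → dLe 0 g →
      (∀ h : X →L[ℝ] ℝ, dLe h f → dLe h g → dLe h 0) → ‖f + g‖ = ‖f‖ + ‖g‖) := by
  refine ⟨exists_dLe_sup, inferInstance, fun f g hf hg _ => ?_⟩
  have hfg : ∀ x, 0 ≤ x → 0 ≤ (f + g) x := fun x hx => add_nonneg (hf x hx) (hg x hx)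
  rw [opNorm_eq_apply_of_nonneg hu hnorm hf, opNorm_eq_apply_of_nonneg hu hnorm hg,
    opNorm_eq_apply_of_nonneg hu hnorm hfg, add_apply]

/-- the norm dual of an Archimedean Riesz space with order unit `u` and
the order unit norm is an AL-space: it is a lattice in the dual order, it is norm
complete, and the norm is additive on disjoint positive elements. -/
theorem statement12 {X : Type*} [NormedAddCommGroup X] [Lattice X] [HasSolidNorm X] [IsOrderedAddMonoid X] [NormedSpace ℝ X]
    (harch : ArchimedeanOrder' X) (u : X) (hu : IsOrderUnit u)
    (hnorm : ∀ x : X, ‖x‖ = unitNorm u x) :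
    -- the dual is a lattice in the dual order
    (∀ f g : X →L[ℝ] ℝ, ∃ h : X →L[ℝ] ℝ, dLe f h ∧ dLe g h ∧
      ∀ k : X →L[ℝ] ℝ, dLe f k → dLe g k → dLe h k) ∧
    -- the dual is norm complete
    CompleteSpace (X →L[ℝ] ℝ) ∧
    -- the AL-property: the norm is additive on disjoint positive functionals
    (∀ f g : X →L[ℝ] ℝ, dLe 0 f → dLe 0 g →
      (∀ h : X →L[ℝ] ℝ, dLe h f → dLe h g → dLe h 0) → ‖f + g‖ = ‖f‖ + ‖g‖) :=
  statement12_general u hu hnorm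
end

section
/- Let X be a Riesz space and let A ⊆ X∼ separate the points of X. Then the topological dual of X equipped with the absolute weak topology generated by A (seminorms p_f(x) = |f|(|x|), f ∈ A) equals the ideal generated by A in the order dual X∼. -/
/-!
If `|g x| ≤ C ∑ p_f x`, then `g` is order bounded, because `z ∈ [a, b]` forces
`|z| ≤ |a| ⊔ |b|` and `∑ p_f x` is monotone in `|x|`; the same monotonicity bounds the
supremum defining `p_g`. Conversely `|g x| ≤ p_g x = p_g |x|`, so a bound for `p_g` on the
positive cone bounds `g` everywhere.
-/

open Set

section

variable {X : Type*} [AddCommGroup X] [Lattice X]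
  [CovariantClass X X (· + ·) (· ≤ ·)] [Module ℝ X] [PosSMulMono ℝ X]

/-- A linear functional on a Riesz space is order bounded (belongs to the order
dual `X∼`). -/
def OrderBddF (f : X →ₗ[ℝ] ℝ) : Prop :=
  ∀ a b : X, ∃ M : ℝ, ∀ z : X, a ≤ z → z ≤ b → |f z| ≤ M

/-- The absolute weak seminorm `p_f (x) = |f| (|x|) = sup {f h : |h| ≤ |x|}`. -/
noncomputable def pAbs (f : X →ₗ[ℝ] ℝ) (x : X) : ℝ :=
  sSup {r : ℝ | ∃ h : X, |h| ≤ |x| ∧ r = f h}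

end

lemma abs_le_sup_abs_of_le_of_le {α : Type*} [AddCommGroup α] [Lattice α] [AddLeftMono α]
    {a b z : α} (ha : a ≤ z) (hb : z ≤ b) : |z| ≤ |a| ⊔ |b| :=
  abs_le'.mpr ⟨hb.trans ((le_abs_self b).trans le_sup_right),
    (neg_le_neg_iff.mpr ha).trans ((neg_le_abs a).trans le_sup_left)⟩

section

variable {X : Type*} [AddCommGroup X] [Lattice X] [Module ℝ X]

lemma pAbs_neg (f : X →ₗ[ℝ] ℝ) (x : X) : pAbs f (-x) = pAbs f x := by
  rw [pAbs, pAbs, abs_neg]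

variable [AddLeftMono X]

lemma pAbs_abs (f : X →ₗ[ℝ] ℝ) (x : X) : pAbs f |x| = pAbs f x := by
  rw [pAbs, pAbs, abs_abs]

lemma sum_pAbs_abs (G : Finset (X →ₗ[ℝ] ℝ)) (x : X) :
    ∑ f ∈ G, pAbs f |x| = ∑ f ∈ G, pAbs f x :=
  Finset.sum_congr rfl fun f _ => pAbs_abs f x

lemma zero_mem_pAbsSet (f : X →ₗ[ℝ] ℝ) (x : X) :
    (0 : ℝ) ∈ {r : ℝ | ∃ h : X, |h| ≤ |x| ∧ r = f h} :=
  ⟨0, by simp, by simp⟩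

lemma bddAbove_pAbsSet {f : X →ₗ[ℝ] ℝ} (hf : OrderBddF f) (x : X) :
    BddAbove {r : ℝ | ∃ h : X, |h| ≤ |x| ∧ r = f h} := by
  obtain ⟨M, hM⟩ := hf (-|x|) |x|
  refine ⟨M, ?_⟩
  rintro - ⟨h, hh, rfl⟩
  refine (le_abs_self _).trans (hM h ?_ ((le_abs_self h).trans hh))
  exact neg_le.mp ((neg_le_abs h).trans hh)

lemma pAbs_nonneg {f : X →ₗ[ℝ] ℝ} (hf : OrderBddF f) (x : X) : 0 ≤ pAbs f x :=
  le_csSup (bddAbove_pAbsSet hf x) (zero_mem_pAbsSet f x)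

lemma pAbs_mono {f : X →ₗ[ℝ] ℝ} (hf : OrderBddF f) {x y : X} (h : |x| ≤ |y|) :
    pAbs f x ≤ pAbs f y :=
  csSup_le_csSup (bddAbove_pAbsSet hf y) ⟨0, zero_mem_pAbsSet f x⟩
    fun _ ⟨u, hu, hr⟩ => ⟨u, hu.trans h, hr⟩

lemma abs_apply_le_pAbs {g : X →ₗ[ℝ] ℝ} (hg : OrderBddF g) (x : X) : |g x| ≤ pAbs g x := by
  have hle : ∀ y, g y ≤ pAbs g y := fun y => le_csSup (bddAbove_pAbsSet hg y) ⟨y, le_rfl, rfl⟩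
  refine abs_le.mpr ⟨?_, hle x⟩
  have := hle (-x)
  rw [map_neg, pAbs_neg] at this
  linarith

lemma pAbs_le_of_abs_apply_le {g : X →ₗ[ℝ] ℝ} {q : X → ℝ}
    (hq : ∀ x y : X, |x| ≤ |y| → q x ≤ q y) (hg : ∀ x, |g x| ≤ q x) (x : X) :
    pAbs g x ≤ q x :=
  csSup_le ⟨0, zero_mem_pAbsSet g x⟩
    fun _ ⟨h, hh, hr⟩ => hr ▸ (le_abs_self _).trans ((hg h).trans (hq h x hh))

lemma orderBddF_of_abs_apply_le {g : X →ₗ[ℝ] ℝ} {q : X → ℝ}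
    (hq : ∀ x y : X, |x| ≤ |y| → q x ≤ q y) (hg : ∀ x, |g x| ≤ q x) : OrderBddF g := by
  intro a b
  refine ⟨q (|a| ⊔ |b|), fun z hz hz' => (hg z).trans (hq _ _ ?_)⟩
  rw [abs_of_nonneg ((abs_nonneg a).trans le_sup_left)]
  exact abs_le_sup_abs_of_le_of_le hz hz'

lemma sum_pAbs_mono {G : Finset (X →ₗ[ℝ] ℝ)} (hG : ∀ f ∈ G, OrderBddF f) {x y : X}
    (h : |x| ≤ |y|) : ∑ f ∈ G, pAbs f x ≤ ∑ f ∈ G, pAbs f y :=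
  Finset.sum_le_sum fun f hf => pAbs_mono (hG f hf) h

end

section

variable {X : Type*} [AddCommGroup X] [Lattice X]
  [CovariantClass X X (· + ·) (· ≤ ·)] [Module ℝ X] [PosSMulMono ℝ X]

theorem statement19_general (A : Set (X →ₗ[ℝ] ℝ))
    (hA : ∀ f ∈ A, OrderBddF f) :
    ∀ g : X →ₗ[ℝ] ℝ,
      ((∃ G : Finset (X →ₗ[ℝ] ℝ), ↑G ⊆ A ∧ ∃ C : ℝ,
          ∀ x : X, |g x| ≤ C * ∑ f ∈ G, pAbs f x) ↔
        (OrderBddF g ∧ ∃ G : Finset (X →ₗ[ℝ] ℝ), ↑G ⊆ A ∧ ∃ C : ℝ,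
          ∀ x : X, 0 ≤ x → pAbs g x ≤ C * ∑ f ∈ G, pAbs f x)) := by
  intro g
  constructor
  · rintro ⟨G, hGA, C, hC⟩
    have hG : ∀ f ∈ G, OrderBddF f := fun f hf => hA f (hGA hf)
    set q : X → ℝ := fun x => max C 0 * ∑ f ∈ G, pAbs f x
    have hq : ∀ x y : X, |x| ≤ |y| → q x ≤ q y := fun x y h =>
      mul_le_mul_of_nonneg_left (sum_pAbs_mono hG h) (le_max_right C 0)
    have hgq : ∀ x, |g x| ≤ q x := fun x =>
      (hC x).trans (mul_le_mul_of_nonneg_right (le_max_left C 0)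
        (Finset.sum_nonneg fun f hf => pAbs_nonneg (hG f hf) x))
    exact ⟨orderBddF_of_abs_apply_le hq hgq, G, hGA, max C 0,
      fun x _ => pAbs_le_of_abs_apply_le hq hgq x⟩
  · rintro ⟨hg, G, hGA, C, hC⟩
    refine ⟨G, hGA, C, fun x => ?_⟩
    calc |g x| ≤ pAbs g x := abs_apply_le_pAbs hg x
      _ = pAbs g |x| := (pAbs_abs g x).symm
      _ ≤ C * ∑ f ∈ G, pAbs f |x| := hC |x| (abs_nonneg x)
      _ = C * ∑ f ∈ G, pAbs f x := by rw [sum_pAbs_abs]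

/-- Kaplan: if `A ⊆ X∼` separates the points of the Riesz space `X`,
then the topological dual of `(X, |σ|(X, A))` (i.e. the functionals dominated by
finitely many of the seminorms `p_f`, `f ∈ A`) is exactly the ideal generated by `A`
in the order dual `X∼` (i.e. the order bounded functionals `g` with
`|g| ≤ C (|f₁| + ⋯ + |fₙ|)` for some `f₁, …, fₙ ∈ A`). -/
theorem statement19 (A : Set (X →ₗ[ℝ] ℝ))
    (hA : ∀ f ∈ A, OrderBddF f)
    (hsep : ∀ x : X, x ≠ 0 → ∃ f ∈ A, f x ≠ 0) :
    ∀ g : X →ₗ[ℝ] ℝ,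
      ((∃ G : Finset (X →ₗ[ℝ] ℝ), ↑G ⊆ A ∧ ∃ C : ℝ,
          ∀ x : X, |g x| ≤ C * ∑ f ∈ G, pAbs f x) ↔
        (OrderBddF g ∧ ∃ G : Finset (X →ₗ[ℝ] ℝ), ↑G ⊆ A ∧ ∃ C : ℝ,
          ∀ x : X, 0 ≤ x → pAbs g x ≤ C * ∑ f ∈ G, pAbs f x)) :=
  statement19_general A hA

end
end
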